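/- arXiv:1711.02233 — 12 statements merged into one kernel-verified Lean document; each statement's English description precedes it below -/
import Mathlib

section
/- Let f = (f_0,...,f_{m-1}) and g = (g_0,...,g_{m-1}) be sequences with entries in {1,-1}, and for s ∈ ℤ define the crosscorrelation h_s = Σ_{j∈ℤ} f_{j+s}·g_j (with f_j = g_j = 0 outside indices 0..m-1). Then h_s = 0 whenever |s| ≥ m, and for 0 ≤ s ≤ m, h_s ≡ s - m + Σ_{j=s}^{m-1} f_j + Σ_{k=0}^{m-1-s} g_k (mod 4). -/
open Finset

private lemma sum_Icc_int (F : ℤ → ℤ) (a : ℤ) (n : ℕ) :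
    ∑ j ∈ Finset.Icc a (a + n - 1), F j = ∑ j ∈ Finset.range n, F ((j : ℤ) + a) := by
  induction n with
  | zero => simp
  | succ n ih =>
    rw [Finset.sum_range_succ, ← ih]
    have h1 : a + ((n:ℕ)+1:ℕ) - 1 = (a + n - 1) + 1 := by push_cast; ring
    rw [h1]
    have h2 : Finset.Icc a (a + (n:ℤ) - 1 + 1) = insert (a + (n:ℤ) - 1 + 1) (Finset.Icc a (a + (n:ℤ) - 1)) := by
      ext x
      simp only [Finset.mem_Icc, Finset.mem_insert]
      omega
    have h3 : a + (n:ℤ) - 1 + 1 = (n:ℤ) + a := by ring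
    rw [h2, Finset.sum_insert (by simp), add_comm, h3]

theorem crosscorrelation_congruence (m : ℕ) (f g : ℤ → ℤ)
    (hf1 : ∀ j : ℤ, 0 ≤ j → j < (m : ℤ) → f j = 1 ∨ f j = -1)
    (hf0 : ∀ j : ℤ, j < 0 ∨ (m : ℤ) ≤ j → f j = 0)
    (hg1 : ∀ j : ℤ, 0 ≤ j → j < (m : ℤ) → g j = 1 ∨ g j = -1)
    (hg0 : ∀ j : ℤ, j < 0 ∨ (m : ℤ) ≤ j → g j = 0)
    (h : ℤ → ℤ)
    (hh : ∀ s : ℤ, h s = ∑ j ∈ Finset.range m, f ((j : ℤ) + s) * g (j : ℤ)) :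
    (∀ s : ℤ, (m : ℤ) ≤ |s| → h s = 0) ∧
    (∀ s : ℤ, 0 ≤ s → s ≤ (m : ℤ) →
      h s ≡ s - (m : ℤ) + (∑ j ∈ Finset.Icc s ((m : ℤ) - 1), f j)
        + (∑ k ∈ Finset.Icc (0 : ℤ) ((m : ℤ) - 1 - s), g k) [ZMOD 4]) := by
  constructor
  · intro s hs
    rw [hh]
    apply Finset.sum_eq_zero
    intro j hj
    simp only [Finset.mem_range] at hj
    rcases abs_le.mp (le_refl |s|) with _
    rcases le_or_gt 0 s with hs' | hs'
    · rw [abs_of_nonneg hs'] at hs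
      rw [hf0 ((j:ℤ)+s) (Or.inr (by omega)), zero_mul]
    · rw [abs_of_neg hs'] at hs
      rw [hf0 ((j:ℤ)+s) (Or.inl (by omega)), zero_mul]
  · intro s hs0 hsm
    set t := s.toNat with ht
    have hst : (t : ℤ) = s := Int.toNat_of_nonneg hs0
    have htm : t ≤ m := by omega
    -- truncate the sum
    have hsum : h s = ∑ j ∈ Finset.range (m - t), f ((j : ℤ) + s) * g (j : ℤ) := by
      rw [hh]
      rw [← Finset.sum_subset (Finset.range_subset_range.mpr (Nat.sub_le m t))]
      intro j hj hj'
      simp only [Finset.mem_range] at hj hj'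
      rw [hf0 ((j:ℤ)+s) (Or.inr (by omega)), zero_mul]
    have hF : ∑ j ∈ Finset.Icc s ((m : ℤ) - 1), f j
        = ∑ j ∈ Finset.range (m - t), f ((j : ℤ) + s) := by
      have : (m : ℤ) - 1 = s + (m - t : ℕ) - 1 := by push_cast; omega
      rw [this, sum_Icc_int]
    have hG : ∑ k ∈ Finset.Icc (0 : ℤ) ((m : ℤ) - 1 - s), g k
        = ∑ j ∈ Finset.range (m - t), g (j : ℤ) := by
      have : (m : ℤ) - 1 - s = 0 + (m - t : ℕ) - 1 := by push_cast; omega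
      rw [this, sum_Icc_int]
      simp
    rw [Int.ModEq] at *
    have key : (4 : ℤ) ∣ (h s - (s - (m : ℤ) + (∑ j ∈ Finset.Icc s ((m : ℤ) - 1), f j)
        + (∑ k ∈ Finset.Icc (0 : ℤ) ((m : ℤ) - 1 - s), g k))) := by
      rw [hsum, hF, hG]
      have hsm' : s - (m : ℤ) = -((m - t : ℕ) : ℤ) := by push_cast; omega
      rw [hsm']
      have hcard : ((m - t : ℕ) : ℤ) = ∑ _j ∈ Finset.range (m - t), (1 : ℤ) := by simp
      rw [hcard]
      rw [← Finset.sum_neg_distrib, ← Finset.sum_add_distrib, ← Finset.sum_add_distrib,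
        ← Finset.sum_sub_distrib]
      apply Finset.dvd_sum
      intro j hj
      simp only [Finset.mem_range] at hj
      have hfj := hf1 ((j:ℤ)+s) (by omega) (by omega)
      have hgj := hg1 (j:ℤ) (by omega) (by omega)
      have : f ((j:ℤ)+s) * g (j:ℤ) - (-1 + f ((j:ℤ)+s) + g (j:ℤ))
          = (f ((j:ℤ)+s) - 1) * (g (j:ℤ) - 1) := by ring
      rcases hfj with h1 | h1 <;> rcases hgj with h2 | h2 <;>
        rw [h1, h2] <;> norm_num
    omega
end

section
/- Let f and g be sequences of length m with entries in {1,-1}, and let h_s = Σ_{j∈ℤ} f_{j+s}·g_j be their crosscorrelation at shift s (entries zero outside 0..m-1). Then for every s with 0 ≤ s ≤ m, h_s + h_{s-m} ≡ -m + Σ_{j=0}^{m-1} f_j + Σ_{k=0}^{m-1} g_k (mod 4). -/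
lemma range_to_Ioc (m : ℕ) (F : ℤ → ℤ) :
    ∑ j ∈ Finset.range m, F (j : ℤ) = ∑ j ∈ Finset.Ioc (-1 : ℤ) ((m : ℤ) - 1), F j := by
  induction m with
  | zero => simp
  | succ n ih =>
    have hset : Finset.Ioc (-1 : ℤ) (((n + 1 : ℕ) : ℤ) - 1)
        = insert (n : ℤ) (Finset.Ioc (-1 : ℤ) ((n : ℤ) - 1)) := by
      ext x
      simp only [Finset.mem_Ioc, Finset.mem_insert]
      push_cast
      omega
    rw [Finset.sum_range_succ, ih, hset, Finset.sum_insert (by simp)]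
    ring

lemma shift_Ioc (F : ℤ → ℤ) (a b c : ℤ) :
    ∑ j ∈ Finset.Ioc a b, F (j + c) = ∑ k ∈ Finset.Ioc (a + c) (b + c), F k := by
  rw [← Finset.map_add_right_Ioc, Finset.sum_map]
  rfl

lemma Ioc_split (F : ℤ → ℤ) {a b c : ℤ} (hab : a ≤ b) (hbc : b ≤ c) :
    (∑ j ∈ Finset.Ioc a b, F j) + ∑ j ∈ Finset.Ioc b c, F j
      = ∑ j ∈ Finset.Ioc a c, F j := by
  rw [← Finset.sum_union (by simp [Finset.disjoint_left, Finset.mem_Ioc]; omega),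
    Finset.Ioc_union_Ioc_eq_Ioc hab hbc]

theorem crosscorrelation_periodic_congruence (m : ℕ) (f g : ℤ → ℤ)
    (hf1 : ∀ j : ℤ, 0 ≤ j → j < (m : ℤ) → f j = 1 ∨ f j = -1)
    (hf0 : ∀ j : ℤ, j < 0 ∨ (m : ℤ) ≤ j → f j = 0)
    (hg1 : ∀ j : ℤ, 0 ≤ j → j < (m : ℤ) → g j = 1 ∨ g j = -1)
    (hg0 : ∀ j : ℤ, j < 0 ∨ (m : ℤ) ≤ j → g j = 0)
    (h : ℤ → ℤ)
    (hh : ∀ s : ℤ, h s = ∑ j ∈ Finset.range m, f ((j : ℤ) + s) * g (j : ℤ)) :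
    ∀ s : ℤ, 0 ≤ s → s ≤ (m : ℤ) →
      h s + h (s - m) ≡ -(m : ℤ) + (∑ j ∈ Finset.Icc (0 : ℤ) ((m : ℤ) - 1), f j)
        + (∑ k ∈ Finset.Icc (0 : ℤ) ((m : ℤ) - 1), g k) [ZMOD 4] := by
  intro s hs0 hsm
  have hIcc : Finset.Icc (0 : ℤ) ((m : ℤ) - 1) = Finset.Ioc (-1 : ℤ) ((m : ℤ) - 1) := by
    ext x; simp only [Finset.mem_Icc, Finset.mem_Ioc]; omega
  -- combined sum
  have hsum : h s + h (s - (m : ℤ))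
      = ∑ j ∈ Finset.range m, (f ((j : ℤ) + s) + f ((j : ℤ) + s - m)) * g (j : ℤ) := by
    rw [hh s, hh (s - m), ← Finset.sum_add_distrib]
    refine Finset.sum_congr rfl fun j _ => ?_
    have : (j : ℤ) + (s - m) = (j : ℤ) + s - m := by ring
    rw [this]; ring
  -- sum of the shifted f-values equals the full sum of f
  have hfsum : ∑ j ∈ Finset.range m, (f ((j : ℤ) + s) + f ((j : ℤ) + s - m))
      = ∑ j ∈ Finset.Ioc (-1 : ℤ) ((m : ℤ) - 1), f j := by
    rw [range_to_Ioc m (fun j => f (j + s) + f (j + s - m)), Finset.sum_add_distrib]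
    have e1 : ∑ j ∈ Finset.Ioc (-1 : ℤ) ((m : ℤ) - 1), f (j + s)
        = ∑ k ∈ Finset.Ioc (s - 1) ((m : ℤ) - 1 + s), f k := by
      have := shift_Ioc f (-1) ((m : ℤ) - 1) s
      simpa [neg_add_eq_sub] using this
    have e2 : ∑ j ∈ Finset.Ioc (-1 : ℤ) ((m : ℤ) - 1), f (j + s - m)
        = ∑ k ∈ Finset.Ioc (s - m - 1) (s - 1), f k := by
      have := shift_Ioc f (-1) ((m : ℤ) - 1) (s - m)
      have harg : ∀ j : ℤ, j + (s - m) = j + s - m := fun j => by ring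
      simp only [harg] at this
      rw [this]
      congr 1
      · ext x; simp only [Finset.mem_Ioc]; omega
    rw [e1, e2]
    have e3 : ∑ k ∈ Finset.Ioc (s - 1) ((m : ℤ) - 1 + s), f k
        = ∑ k ∈ Finset.Ioc (s - 1) ((m : ℤ) - 1), f k := by
      refine (Finset.sum_subset ?_ ?_).symm
      · intro x hx; simp only [Finset.mem_Ioc] at *; omega
      · intro x hx hx'; simp only [Finset.mem_Ioc] at *
        exact hf0 x (Or.inr (by omega))
    have e4 : ∑ k ∈ Finset.Ioc (s - m - 1) (s - 1), f k
        = ∑ k ∈ Finset.Ioc (-1 : ℤ) (s - 1), f k := by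
      refine (Finset.sum_subset ?_ ?_).symm
      · intro x hx; simp only [Finset.mem_Ioc] at *; omega
      · intro x hx hx'; simp only [Finset.mem_Ioc] at *
        exact hf0 x (Or.inl (by omega))
    rw [e3, e4, add_comm]
    exact Ioc_split f (by omega) (by omega)
  have hgsum : ∑ j ∈ Finset.range m, g (j : ℤ)
      = ∑ j ∈ Finset.Ioc (-1 : ℤ) ((m : ℤ) - 1), g j := range_to_Ioc m g
  -- termwise values
  have hterm : ∀ j ∈ Finset.range m,
      (f ((j : ℤ) + s) + f ((j : ℤ) + s - m)) = 1 ∨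
      (f ((j : ℤ) + s) + f ((j : ℤ) + s - m)) = -1 := by
    intro j hj
    rw [Finset.mem_range] at hj
    have hj' : (j : ℤ) < m := by exact_mod_cast hj
    by_cases hc : (j : ℤ) + s < m
    · have h1 := hf1 ((j : ℤ) + s) (by omega) hc
      have h2 := hf0 ((j : ℤ) + s - m) (Or.inl (by omega))
      rw [h2]; rcases h1 with h1 | h1 <;> simp [h1]
    · have h1 := hf1 ((j : ℤ) + s - m) (by omega) (by omega)
      have h2 := hf0 ((j : ℤ) + s) (Or.inr (by omega))
      rw [h2]; rcases h1 with h1 | h1 <;> simp [h1]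
  -- reduce to divisibility
  rw [hsum, hIcc, ← hfsum, ← hgsum, Int.modEq_iff_dvd]
  have hm : -(m : ℤ) = ∑ _j ∈ Finset.range m, (-1 : ℤ) := by simp
  have key : -(m : ℤ) + (∑ j ∈ Finset.range m, (f ((j : ℤ) + s) + f ((j : ℤ) + s - m)))
      + (∑ j ∈ Finset.range m, g (j : ℤ))
      - ∑ j ∈ Finset.range m, (f ((j : ℤ) + s) + f ((j : ℤ) + s - m)) * g (j : ℤ)
      = ∑ j ∈ Finset.range m, ((-1) + (f ((j : ℤ) + s) + f ((j : ℤ) + s - m)) + g (j : ℤ)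
          - (f ((j : ℤ) + s) + f ((j : ℤ) + s - m)) * g (j : ℤ)) := by
    rw [hm, ← Finset.sum_add_distrib, ← Finset.sum_add_distrib, ← Finset.sum_sub_distrib]
  rw [key]
  refine Finset.dvd_sum fun j hj => ?_
  have hj' : (j : ℤ) < m := by
    rw [Finset.mem_range] at hj; exact_mod_cast hj
  have hgj := hg1 (j : ℤ) (by positivity) hj'
  rcases hterm j hj with ha | ha <;> rcases hgj with hb | hb <;>
    rw [ha, hb] <;> norm_num
end

section
/- Let f be a sequence of length m with entries in {1,-1}, and let h_s = Σ_{j∈ℤ} f_{j+s}·f_j be its aperiodic autocorrelation at shift s. Then for every s with 0 ≤ s ≤ m, h_s + h_{s-m} ≡ m (mod 4). -/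
lemma prod_pm_aux (S : Finset ℕ) (t : ℕ → ℤ) (ht : ∀ j ∈ S, t j = 1 ∨ t j = -1) :
    ∏ j ∈ S, t j = 1 ∨ ∏ j ∈ S, t j = -1 := by
  classical
  induction S using Finset.induction with
  | empty => simp
  | @insert a S' hx ih =>
    rw [Finset.prod_insert hx]
    rcases ht a (Finset.mem_insert_self a S') with h1 | h1 <;>
      rcases ih (fun j hj => ht j (Finset.mem_insert_of_mem hj)) with h2 | h2 <;>
      simp [h1, h2]

lemma sum_pm_aux (S : Finset ℕ) (t : ℕ → ℤ) (ht : ∀ j ∈ S, t j = 1 ∨ t j = -1) :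
    ∑ j ∈ S, t j ≡ (S.card : ℤ) - 1 + ∏ j ∈ S, t j [ZMOD 4] := by
  classical
  induction S using Finset.induction with
  | empty => simp [Int.ModEq]
  | @insert a S' hx ih =>
    have ht' : ∀ j ∈ S', t j = 1 ∨ t j = -1 := fun j hj => ht j (Finset.mem_insert_of_mem hj)
    have ih' := ih ht'
    rw [Finset.prod_insert hx, Finset.sum_insert hx, Finset.card_insert_of_notMem hx]
    rcases ht a (Finset.mem_insert_self a S') with h1 | h1 <;>
      rcases prod_pm_aux S' t ht' with h2 | h2 <;>
      rw [h1, h2] <;> rw [h2] at ih' <;>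
      · unfold Int.ModEq at *
        push_cast at *
        omega

theorem autocorrelation_periodic_congruence (m : ℕ) (f : ℤ → ℤ)
    (hf1 : ∀ j : ℤ, 0 ≤ j → j < (m : ℤ) → f j = 1 ∨ f j = -1)
    (hf0 : ∀ j : ℤ, j < 0 ∨ (m : ℤ) ≤ j → f j = 0)
    (h : ℤ → ℤ)
    (hh : ∀ s : ℤ, h s = ∑ j ∈ Finset.range m, f ((j : ℤ) + s) * f (j : ℤ)) :
    ∀ s : ℤ, 0 ≤ s → s ≤ (m : ℤ) → h s + h (s - m) ≡ (m : ℤ) [ZMOD 4] := by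
  intro s hs0 hsm
  set s' := s.toNat with hs'def
  have hss : (s' : ℤ) = s := Int.toNat_of_nonneg hs0
  have hs'm : s' ≤ m := by omega
  set t : ℕ → ℤ := fun j => f (((j + s') % m : ℕ)) * f (j : ℤ) with htdef
  have key : h s + h (s - m) = ∑ j ∈ Finset.range m, t j := by
    rw [hh, hh, ← Finset.sum_add_distrib]
    apply Finset.sum_congr rfl
    intro j hj
    simp only [Finset.mem_range] at hj
    by_cases hc : j + s' < m
    · have h0 : f ((j : ℤ) + (s - m)) = 0 := hf0 _ (Or.inl (by omega))
      have hmod : (j + s') % m = j + s' := Nat.mod_eq_of_lt hc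
      have hcast : ((j + s' : ℕ) : ℤ) = (j : ℤ) + s := by omega
      simp only [htdef, h0, hmod, hcast]
      ring
    · have h0 : f ((j : ℤ) + s) = 0 := hf0 _ (Or.inr (by omega))
      have hmod : (j + s') % m = j + s' - m := by
        rw [Nat.mod_eq_sub_mod (by omega), Nat.mod_eq_of_lt (by omega)]
      have hcast : ((j + s' - m : ℕ) : ℤ) = (j : ℤ) + (s - m) := by omega
      simp only [htdef, h0, hmod, hcast]
      ring
  have ht : ∀ j ∈ Finset.range m, t j = 1 ∨ t j = -1 := by
    intro j hj
    simp only [Finset.mem_range] at hj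
    have hmlt : (j + s') % m < m := Nat.mod_lt _ (by omega)
    have h1 := hf1 (j : ℤ) (by omega) (by omega)
    have h2 := hf1 (((j + s') % m : ℕ) : ℤ) (by omega) (by exact_mod_cast hmlt)
    rcases h1 with h1 | h1 <;> rcases h2 with h2 | h2 <;>
      · simp only [htdef]
        rw [h1, h2]
        norm_num
  have hperm : ∏ j ∈ Finset.range m, f (((j + s') % m : ℕ)) = ∏ j ∈ Finset.range m, f (j : ℤ) := by
    apply Finset.prod_nbij' (fun j => (j + s') % m) (fun j => (j + (m - s')) % m)
    · intro a ha
      simp only [Finset.mem_range] at *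
      exact Nat.mod_lt _ (by omega)
    · intro a ha
      simp only [Finset.mem_range] at *
      exact Nat.mod_lt _ (by omega)
    · intro a ha
      simp only [Finset.mem_range] at ha
      rw [Nat.mod_add_mod, show a + s' + (m - s') = a + m by omega, Nat.add_mod_right,
        Nat.mod_eq_of_lt ha]
    · intro a ha
      simp only [Finset.mem_range] at ha
      rw [Nat.mod_add_mod, show a + (m - s') + s' = a + m by omega, Nat.add_mod_right,
        Nat.mod_eq_of_lt ha]
    · intro a ha
      rfl
  have hprod : ∏ j ∈ Finset.range m, t j = 1 := by
    have e1 : ∏ j ∈ Finset.range m, t j = (∏ j ∈ Finset.range m, f (j : ℤ)) ^ 2 := by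
      simp only [htdef]
      rw [Finset.prod_mul_distrib, hperm, sq]
    rw [e1, ← Finset.prod_pow]
    apply Finset.prod_eq_one
    intro j hj
    simp only [Finset.mem_range] at hj
    rcases hf1 (j : ℤ) (by omega) (by omega) with h1 | h1 <;> simp [h1]
  have hfin := sum_pm_aux (Finset.range m) t ht
  rw [hprod, Finset.card_range] at hfin
  rw [key]
  unfold Int.ModEq at *
  omega
end

section
/- Let g and h be sequences of length m with entries in {1,-1}, and define f_s = C_{g,g}(s) + C_{h,h}(s), the sum of their autocorrelations at shift s. Then every f_s is even, f_0 = 2m, f_s = 0 for |s| ≥ m, and for 0 ≤ s ≤ m one has f_s + f_{s-m} ≡ 2m (mod 4). -/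
lemma pm_sum (S : Finset ℕ) (t : ℕ → ℤ) (h : ∀ i ∈ S, t i = 1 ∨ t i = -1)
    (hp : ∏ i ∈ S, t i = 1) : (∑ i ∈ S, t i) ≡ (S.card : ℤ) [ZMOD 4] := by
  classical
  set K := S.filter (fun i => t i = -1) with hK
  have hsum : ∑ i ∈ S, t i = (S.card : ℤ) - 2 * K.card := by
    rw [← Finset.sum_filter_add_sum_filter_not S (fun i => t i = -1)]
    have h1 : ∑ i ∈ K, t i = -(K.card : ℤ) := by
      rw [Finset.sum_congr rfl (fun i hi => (Finset.mem_filter.mp hi).2)]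
      simp [K]
    have h2 : ∑ i ∈ S.filter (fun i => ¬ t i = -1), t i
        = ((S.filter (fun i => ¬ t i = -1)).card : ℤ) := by
      rw [Finset.sum_congr rfl (fun i hi => ?_), Finset.sum_const, nsmul_eq_mul, mul_one]
      have := Finset.mem_filter.mp hi
      rcases h i this.1 with h' | h'
      · exact h'
      · exact absurd h' this.2
    have hcard : K.card + (S.filter (fun i => ¬ t i = -1)).card = S.card :=
      Finset.card_filter_add_card_filter_not _
    rw [h1, h2]
    omega
  have hprod : ∏ i ∈ S, t i = (-1) ^ K.card := by
    rw [← Finset.prod_filter_mul_prod_filter_not S (fun i => t i = -1)]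
    have h1 : ∏ i ∈ K, t i = (-1 : ℤ) ^ K.card := by
      rw [Finset.prod_congr rfl (fun i hi => (Finset.mem_filter.mp hi).2)]
      simp [K]
    have h2 : ∏ i ∈ S.filter (fun i => ¬ t i = -1), t i = 1 := by
      apply Finset.prod_eq_one
      intro i hi
      have := Finset.mem_filter.mp hi
      rcases h i this.1 with h' | h'
      · exact h'
      · exact absurd h' this.2
    rw [h1, h2, mul_one]
  have heven : Even K.card := by
    rw [hprod] at hp
    exact (neg_one_pow_eq_one_iff_even (by norm_num)).mp hp
  obtain ⟨l, hl⟩ := heven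
  rw [hsum, hl]
  push_cast
  exact (Int.modEq_iff_dvd.mpr ⟨-l, by ring⟩).symm

lemma prod_shift (m s' : ℕ) (hs : s' ≤ m) (a : ℕ → ℤ) :
    ∏ j ∈ Finset.range m, a ((j + s') % m) = ∏ j ∈ Finset.range m, a j := by
  rcases Nat.eq_zero_or_pos m with hm | hm
  · simp [hm]
  refine Finset.prod_nbij' (fun j => (j + s') % m) (fun j => (j + (m - s')) % m)
    (fun j hj => Finset.mem_range.mpr (Nat.mod_lt _ hm))
    (fun j hj => Finset.mem_range.mpr (Nat.mod_lt _ hm)) ?_ ?_ (fun j hj => rfl)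
  · intro j hj
    have hjm := Finset.mem_range.mp hj
    show ((j + s') % m + (m - s')) % m = j
    rw [Nat.mod_add_mod]
    have : j + s' + (m - s') = j + m := by omega
    rw [this, Nat.add_mod_right, Nat.mod_eq_of_lt hjm]
  · intro j hj
    have hjm := Finset.mem_range.mp hj
    show ((j + (m - s')) % m + s') % m = j
    rw [Nat.mod_add_mod]
    have : j + (m - s') + s' = j + m := by omega
    rw [this, Nat.add_mod_right, Nat.mod_eq_of_lt hjm]

lemma paf (m : ℕ) (a : ℤ → ℤ)
    (h1 : ∀ j : ℤ, 0 ≤ j → j < (m : ℤ) → a j = 1 ∨ a j = -1)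
    (h0 : ∀ j : ℤ, j < 0 ∨ (m : ℤ) ≤ j → a j = 0)
    (s : ℤ) (hs0 : 0 ≤ s) (hsm : s ≤ (m : ℤ)) :
    (∑ j ∈ Finset.range m, a ((j : ℤ) + s) * a (j : ℤ))
      + (∑ j ∈ Finset.range m, a ((j : ℤ) + (s - m)) * a (j : ℤ)) ≡ (m : ℤ) [ZMOD 4] := by
  classical
  set s' := s.toNat with hs'
  have hss' : (s' : ℤ) = s := Int.toNat_of_nonneg hs0
  have hs'm : s' ≤ m := by omega
  rw [← Finset.sum_add_distrib]
  have key : ∀ j ∈ Finset.range m,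
      a ((j : ℤ) + s) * a (j : ℤ) + a ((j : ℤ) + (s - m)) * a (j : ℤ)
        = a (((j + s') % m : ℕ) : ℤ) * a (j : ℤ) := by
    intro j hj
    have hjm := Finset.mem_range.mp hj
    rw [← add_mul]
    congr 1
    rcases lt_or_ge ((j : ℤ) + s) (m : ℤ) with hc | hc
    · have hz : a ((j : ℤ) + (s - m)) = 0 := h0 _ (Or.inl (by omega))
      have hmod : (j + s') % m = j + s' := Nat.mod_eq_of_lt (by omega)
      rw [hz, add_zero, hmod]
      push_cast
      rw [hss']
    · have hz : a ((j : ℤ) + s) = 0 := h0 _ (Or.inr hc)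
      have hmod : (j + s') % m = j + s' - m := by
        rw [Nat.mod_eq_sub_mod (by omega), Nat.mod_eq_of_lt (by omega)]
      rw [hz, zero_add, hmod]
      have : ((j + s' - m : ℕ) : ℤ) = (j : ℤ) + (s - m) := by omega
      rw [this]
  rw [Finset.sum_congr rfl key]
  have hpm : ∀ j ∈ Finset.range m, a (((j + s') % m : ℕ) : ℤ) * a (j : ℤ) = 1
      ∨ a (((j + s') % m : ℕ) : ℤ) * a (j : ℤ) = -1 := by
    intro j hj
    have hjm := Finset.mem_range.mp hj
    have hm : 0 < m := by omega
    have hb : (j + s') % m < m := Nat.mod_lt _ hm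
    rcases h1 (((j + s') % m : ℕ) : ℤ) (by positivity) (by exact_mod_cast hb) with e1 | e1 <;>
      rcases h1 (j : ℤ) (by positivity) (by exact_mod_cast hjm) with e2 | e2 <;>
      (rw [e1, e2]; norm_num)
  have hprod : ∏ j ∈ Finset.range m, a (((j + s') % m : ℕ) : ℤ) * a (j : ℤ) = 1 := by
    rw [Finset.prod_mul_distrib]
    have h1' : ∏ j ∈ Finset.range m, a (((j + s') % m : ℕ) : ℤ)
        = ∏ j ∈ Finset.range m, a (j : ℤ) := prod_shift m s' hs'm (fun n => a (n : ℤ))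
    rw [h1', ← Finset.prod_mul_distrib]
    apply Finset.prod_eq_one
    intro j hj
    have hjm := Finset.mem_range.mp hj
    rcases h1 (j : ℤ) (by positivity) (by exact_mod_cast hjm) with e | e <;> simp [e]
  have := pm_sum (Finset.range m) (fun j => a (((j + s') % m : ℕ) : ℤ) * a (j : ℤ)) hpm hprod
  simpa using this
theorem sum_autocorrelations_equal_length (m : ℕ) (g h : ℤ → ℤ)
    (hg1 : ∀ j : ℤ, 0 ≤ j → j < (m : ℤ) → g j = 1 ∨ g j = -1)
    (hg0 : ∀ j : ℤ, j < 0 ∨ (m : ℤ) ≤ j → g j = 0)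
    (hh1 : ∀ j : ℤ, 0 ≤ j → j < (m : ℤ) → h j = 1 ∨ h j = -1)
    (hh0 : ∀ j : ℤ, j < 0 ∨ (m : ℤ) ≤ j → h j = 0)
    (f : ℤ → ℤ)
    (hf : ∀ s : ℤ, f s = (∑ j ∈ Finset.range m, g ((j : ℤ) + s) * g (j : ℤ))
        + ∑ j ∈ Finset.range m, h ((j : ℤ) + s) * h (j : ℤ)) :
    (∀ s : ℤ, 2 ∣ f s) ∧ f 0 = 2 * (m : ℤ) ∧
    (∀ s : ℤ, (m : ℤ) ≤ |s| → f s = 0) ∧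
    (∀ s : ℤ, 0 ≤ s → s ≤ (m : ℤ) → f s + f (s - m) ≡ 2 * (m : ℤ) [ZMOD 4]) := by
  refine ⟨?_, ?_, ?_, ?_⟩
  · intro s
    rw [hf s, ← Finset.sum_add_distrib]
    apply Finset.dvd_sum
    intro j hj
    have hjm := Finset.mem_range.mp hj
    rcases lt_or_ge ((j : ℤ) + s) 0 with hc | hc
    · rw [hg0 _ (Or.inl hc), hh0 _ (Or.inl hc)]; simp
    rcases le_or_gt (m : ℤ) ((j : ℤ) + s) with hc2 | hc2
    · rw [hg0 _ (Or.inr hc2), hh0 _ (Or.inr hc2)]; simp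
    rcases hg1 _ hc hc2 with e1 | e1 <;> rcases hg1 (j : ℤ) (by positivity) (by exact_mod_cast hjm) with e2 | e2 <;>
      rcases hh1 _ hc hc2 with e3 | e3 <;> rcases hh1 (j : ℤ) (by positivity) (by exact_mod_cast hjm) with e4 | e4 <;>
      rw [e1, e2, e3, e4] <;> decide
  · rw [hf 0]
    have hsq : ∀ (a : ℤ → ℤ), (∀ j : ℤ, 0 ≤ j → j < (m : ℤ) → a j = 1 ∨ a j = -1) →
        ∑ j ∈ Finset.range m, a ((j : ℤ) + 0) * a (j : ℤ) = (m : ℤ) := by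
      intro a h1
      rw [Finset.sum_congr rfl (fun j hj => ?_), Finset.sum_const, Finset.card_range,
        nsmul_eq_mul, mul_one]
      have hjm := Finset.mem_range.mp hj
      rw [add_zero]
      rcases h1 (j : ℤ) (by positivity) (by exact_mod_cast hjm) with e | e <;> rw [e] <;> norm_num
    rw [hsq g hg1, hsq h hh1]; ring
  · intro s hs
    rw [hf s]
    have : ∀ (a : ℤ → ℤ), (∀ j : ℤ, j < 0 ∨ (m : ℤ) ≤ j → a j = 0) →
        ∑ j ∈ Finset.range m, a ((j : ℤ) + s) * a (j : ℤ) = 0 := by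
      intro a h0
      apply Finset.sum_eq_zero
      intro j hj
      have hjm := Finset.mem_range.mp hj
      rcases le_abs.mp hs with hc | hc
      · rw [h0 _ (Or.inr (by omega)), zero_mul]
      · rw [h0 _ (Or.inl (by omega)), zero_mul]
    rw [this g hg0, this h hh0, add_zero]
  · intro s hs0 hsm
    rw [hf s, hf (s - m)]
    have hg := paf m g hg1 hg0 s hs0 hsm
    have hh := paf m h hh1 hh0 s hs0 hsm
    have h2 : (2 : ℤ) * m = m + m := by ring
    calc (∑ j ∈ Finset.range m, g ((j : ℤ) + s) * g (j : ℤ)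
            + ∑ j ∈ Finset.range m, h ((j : ℤ) + s) * h (j : ℤ))
          + (∑ j ∈ Finset.range m, g ((j : ℤ) + (s - m)) * g (j : ℤ)
            + ∑ j ∈ Finset.range m, h ((j : ℤ) + (s - m)) * h (j : ℤ))
        = (∑ j ∈ Finset.range m, g ((j : ℤ) + s) * g (j : ℤ)
            + ∑ j ∈ Finset.range m, g ((j : ℤ) + (s - m)) * g (j : ℤ))
          + (∑ j ∈ Finset.range m, h ((j : ℤ) + s) * h (j : ℤ)
            + ∑ j ∈ Finset.range m, h ((j : ℤ) + (s - m)) * h (j : ℤ)) := by ring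
      _ ≡ (m : ℤ) + (m : ℤ) [ZMOD 4] := Int.ModEq.add hg hh
      _ = 2 * (m : ℤ) := by ring
end

section
/- Let g(z), h(z) ∈ ℂ[z] and let f(z) = g(z²) + z·h(z²). Then ‖f‖₄⁴ + ‖f·f̃‖₂² = 2·‖|g(z)|² + |h(z)|²‖₂², where f̃(z) = f(-z), ‖·‖_p denotes the L^p norm on the complex unit circle, and |a(z)|² denotes a(z)·conj(a)(z⁻¹). -/
open Polynomial MeasureTheory intervalIntegral

noncomputable def circ (θ : ℝ) : ℂ := Complex.exp (θ * Complex.I)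

lemma circ_norm (θ : ℝ) : ‖circ θ‖ = 1 := by
  simp [circ, Complex.norm_exp_ofReal_mul_I]

lemma circ_add_two_pi (θ : ℝ) : circ (θ + 2 * Real.pi) = circ θ := by
  unfold circ
  push_cast
  rw [add_mul, Complex.exp_add, Complex.exp_two_pi_mul_I, mul_one]

lemma circ_add_pi (θ : ℝ) : circ (θ + Real.pi) = - circ θ := by
  unfold circ
  push_cast
  rw [add_mul, Complex.exp_add, Complex.exp_pi_mul_I]
  ring

lemma circ_two_mul (θ : ℝ) : circ (2 * θ) = circ θ ^ 2 := by
  unfold circ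
  push_cast
  rw [show ((2:ℂ) * θ) * Complex.I = (2:ℕ) * (θ * Complex.I) by push_cast; ring,
    Complex.exp_nat_mul]

lemma circ_continuous : Continuous circ := by
  unfold circ; fun_prop

lemma parallelo (g h f : Polynomial ℂ) (hf : f = g.comp (X ^ 2) + X * h.comp (X ^ 2))
    (z : ℂ) (hz : ‖z‖ = 1) :
    ‖f.eval z‖ ^ 2 + ‖f.eval (-z)‖ ^ 2
      = 2 * (‖g.eval (z ^ 2)‖ ^ 2 + ‖h.eval (z ^ 2)‖ ^ 2) := by
  subst hf
  simp only [eval_add, eval_mul, eval_comp, eval_pow, eval_X, neg_sq]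
  have := parallelogram_law_with_norm ℝ (g.eval (z ^ 2)) (z * h.eval (z ^ 2))
  have hn : ‖z * h.eval (z ^ 2)‖ = ‖h.eval (z ^ 2)‖ := by
    rw [norm_mul, hz, one_mul]
  rw [hn] at this
  have hsub : g.eval (z ^ 2) + -z * h.eval (z ^ 2)
      = g.eval (z ^ 2) - z * h.eval (z ^ 2) := by ring
  rw [hsub]
  nlinarith [this]

theorem interleaving_L4_identity (g h : Polynomial ℂ)
    (f : Polynomial ℂ) (hf : f = g.comp (X ^ 2) + X * h.comp (X ^ 2)) :
    (1 / (2 * Real.pi)) * (∫ θ in (0 : ℝ)..(2 * Real.pi),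
        ‖f.eval (Complex.exp (θ * Complex.I))‖ ^ 4)
      + (1 / (2 * Real.pi)) * (∫ θ in (0 : ℝ)..(2 * Real.pi),
        ‖f.eval (Complex.exp (θ * Complex.I)) * f.eval (-Complex.exp (θ * Complex.I))‖ ^ 2)
    = 2 * ((1 / (2 * Real.pi)) * (∫ θ in (0 : ℝ)..(2 * Real.pi),
        (‖g.eval (Complex.exp (θ * Complex.I))‖ ^ 2
          + ‖h.eval (Complex.exp (θ * Complex.I))‖ ^ 2) ^ 2)) := by
  set F : ℝ → ℝ := fun θ => ‖f.eval (circ θ)‖ ^ 2 with hF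
  set A : ℝ → ℝ := fun θ => ‖g.eval (circ θ)‖ ^ 2 + ‖h.eval (circ θ)‖ ^ 2 with hA
  have hFc : Continuous F := by
    apply Continuous.pow
    exact (f.continuous.comp circ_continuous).norm
  have hAc : Continuous A := by
    apply Continuous.add <;> apply Continuous.pow <;>
      exact (Polynomial.continuous _ |>.comp circ_continuous).norm
  -- periodicity
  have hFper : Function.Periodic F (2 * Real.pi) := fun θ => by
    simp only [hF, circ_add_two_pi]
  have hAper : Function.Periodic A (2 * Real.pi) := fun θ => by
    simp only [hA, circ_add_two_pi]
  -- key pointwise identity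
  have hkey : ∀ θ : ℝ, F θ + F (θ + Real.pi) = 2 * A (2 * θ) := by
    intro θ
    simp only [hF, hA, circ_add_pi, circ_two_mul]
    exact parallelo g h f hf (circ θ) (circ_norm θ)
  have eL : (∫ θ in (0:ℝ)..(2*Real.pi), ‖f.eval (Complex.exp (θ * Complex.I))‖ ^ 4)
      = ∫ θ in (0:ℝ)..(2*Real.pi), F θ ^ 2 := by
    refine intervalIntegral.integral_congr fun θ _ => ?_
    simp only [hF, circ]
    ring
  have eM : (∫ θ in (0:ℝ)..(2*Real.pi),
      ‖f.eval (Complex.exp (θ * Complex.I)) * f.eval (-Complex.exp (θ * Complex.I))‖ ^ 2)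
      = ∫ θ in (0:ℝ)..(2*Real.pi), F θ * F (θ + Real.pi) := by
    refine intervalIntegral.integral_congr fun θ _ => ?_
    simp only [hF]
    rw [show Complex.exp ((θ:ℂ) * Complex.I) = circ θ from rfl, ← circ_add_pi, norm_mul]
    ring
  have eR : (∫ θ in (0:ℝ)..(2*Real.pi),
      (‖g.eval (Complex.exp (θ * Complex.I))‖ ^ 2
        + ‖h.eval (Complex.exp (θ * Complex.I))‖ ^ 2) ^ 2)
      = ∫ θ in (0:ℝ)..(2*Real.pi), A θ ^ 2 := by
    refine intervalIntegral.integral_congr fun θ _ => ?_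
    simp only [hA, circ]
  clear_value F A
  clear hF hA
  rw [eL, eM, eR]
  clear eL eM eR
  set tp := 2 * Real.pi with htp
  -- the three integrals
  set L := ∫ θ in (0:ℝ)..tp, F θ ^ 2 with hL
  set M := ∫ θ in (0:ℝ)..tp, F θ * F (θ + Real.pi) with hM
  set R := ∫ θ in (0:ℝ)..tp, A θ ^ 2 with hR
  have hmain : L + M = 2 * R := by
    -- H θ = F θ * A (2θ), periodic with period 2π
    set H : ℝ → ℝ := fun θ => F θ * A (2 * θ) with hH
    have hHc : Continuous H := hFc.mul (hAc.comp (continuous_const.mul continuous_id))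
    have hHper : Function.Periodic H tp := by
      intro θ
      simp only [hH]
      rw [hFper θ]
      congr 1
      have : 2 * (θ + tp) = 2 * θ + tp + tp := by rw [htp]; ring
      rw [this, hAper, hAper]
    -- step 1 : ∫ H = ∫ θ, F(θ+π) A(2θ)
    have step1 : (∫ θ in (0:ℝ)..tp, H θ)
        = ∫ θ in (0:ℝ)..tp, F (θ + Real.pi) * A (2 * θ) := by
      have e1 : (∫ θ in (0:ℝ)..tp, H θ) = ∫ θ in Real.pi..(Real.pi + tp), H θ := by
        have := hHper.intervalIntegral_add_eq (0:ℝ) Real.pi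
        simpa using this
      have e2 : (∫ θ in (0:ℝ)..tp, H (θ + Real.pi)) = ∫ θ in Real.pi..(Real.pi + tp), H θ := by
        have := intervalIntegral.integral_comp_add_right (a := (0:ℝ)) (b := tp) H Real.pi
        rw [this]
        congr 1 <;> ring
      rw [e1, ← e2]
      refine intervalIntegral.integral_congr fun θ _ => ?_
      simp only [hH]
      congr 1
      have : 2 * (θ + Real.pi) = 2 * θ + tp := by rw [htp]; ring
      rw [this, hAper]
    -- step 2 : L + M = ∫ 2 * A(2θ)^2
    have intFF : IntervalIntegrable (fun θ => F θ ^ 2) volume 0 tp :=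
      (hFc.pow 2).intervalIntegrable _ _
    have intFFp : IntervalIntegrable (fun θ => F θ * F (θ + Real.pi)) volume 0 tp :=
      (hFc.mul (hFc.comp (continuous_id.add continuous_const))).intervalIntegrable _ _
    have step2 : L + M = ∫ θ in (0:ℝ)..tp, 2 * A (2 * θ) ^ 2 := by
      rw [hL, hM, ← intervalIntegral.integral_add intFF intFFp]
      have lhs_eq : (∫ θ in (0:ℝ)..tp, (F θ ^ 2 + F θ * F (θ + Real.pi)))
          = ∫ θ in (0:ℝ)..tp, 2 * H θ := by
        refine intervalIntegral.integral_congr fun θ _ => ?_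
        simp only [hH]
        have h2 : A (2 * θ) = (F θ + F (θ + Real.pi)) / 2 := by linear_combination -(hkey θ) / 2
        rw [h2]; ring
      rw [lhs_eq, intervalIntegral.integral_const_mul]
      have twoH : (∫ θ in (0:ℝ)..tp, H θ)
          = ∫ θ in (0:ℝ)..tp, A (2 * θ) ^ 2 := by
        have intH : IntervalIntegrable H volume 0 tp := hHc.intervalIntegrable _ _
        have intH' : IntervalIntegrable (fun θ => F (θ + Real.pi) * A (2 * θ)) volume 0 tp :=
          ((hFc.comp (continuous_id.add continuous_const)).mul
            (hAc.comp (continuous_const.mul continuous_id))).intervalIntegrable _ _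
        have h2 : (2:ℝ) * ∫ θ in (0:ℝ)..tp, H θ
            = ∫ θ in (0:ℝ)..tp, 2 * A (2 * θ) ^ 2 := by
          have : (2:ℝ) * ∫ θ in (0:ℝ)..tp, H θ
              = (∫ θ in (0:ℝ)..tp, H θ) + ∫ θ in (0:ℝ)..tp, F (θ + Real.pi) * A (2 * θ) := by
            rw [← step1]; ring
          rw [this, ← intervalIntegral.integral_add intH intH']
          refine intervalIntegral.integral_congr fun θ _ => ?_
          simp only [hH]
          have h2 : A (2 * θ) = (F θ + F (θ + Real.pi)) / 2 := by linear_combination -(hkey θ) / 2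
          rw [h2]; ring
        have h3 : (∫ θ in (0:ℝ)..tp, 2 * A (2 * θ) ^ 2)
            = 2 * ∫ θ in (0:ℝ)..tp, A (2 * θ) ^ 2 := by
          rw [intervalIntegral.integral_const_mul]
        linarith [h2, h3]
      rw [twoH]
      rw [intervalIntegral.integral_const_mul]
    -- step 3 : ∫ A(2θ)^2 = R
    have step3 : (∫ θ in (0:ℝ)..tp, A (2 * θ) ^ 2) = R := by
      have e1 : (∫ θ in (0:ℝ)..tp, A (2 * θ) ^ 2)
          = (2:ℝ)⁻¹ • ∫ θ in (0:ℝ)..(2 * tp), A θ ^ 2 := by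
        have := intervalIntegral.integral_comp_mul_left (a := (0:ℝ)) (b := tp)
          (fun θ => A θ ^ 2) (c := (2:ℝ)) (by norm_num)
        simpa using this
      have hA2per : Function.Periodic (fun θ => A θ ^ 2) tp := fun θ => by
        simp [hAper θ]
      have e2 : (∫ θ in (0:ℝ)..(2 * tp), A θ ^ 2)
          = (∫ θ in (0:ℝ)..tp, A θ ^ 2) + ∫ θ in tp..(2 * tp), A θ ^ 2 := by
        rw [intervalIntegral.integral_add_adjacent_intervals]
        · exact (hAc.pow 2).intervalIntegrable _ _
        · exact (hAc.pow 2).intervalIntegrable _ _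
      have e3 : (∫ θ in tp..(2 * tp), A θ ^ 2) = ∫ θ in (0:ℝ)..tp, A θ ^ 2 := by
        have := hA2per.intervalIntegral_add_eq tp 0
        simpa [two_mul] using this
      rw [e1, e2, e3, hR]
      simp
      ring
    rw [step2, intervalIntegral.integral_const_mul, step3]
  rw [← mul_add, hmain]
  ring
end

section
/- Let (g,h) be a pair of binary sequences, each of odd length m > 2, with f_s = C_{g,g}(s) + C_{h,h}(s). Suppose |f_s| ≤ 2 for every nonzero s and (g,h) is not a Golay complementary pair. Then for every s with 0 < s < m, the multiset {|f_s|, |f_{s-m}|} equals {0, 2}. -/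
open Finset

/-- If every value of `t` on `S` is `±1` and the product is `1`,
then the sum is congruent to `S.card` mod 4. -/
lemma aux_sum_eq_card_of_prod_one (S : Finset ℕ) (t : ℕ → ℤ)
    (ht : ∀ a ∈ S, t a = 1 ∨ t a = -1) (hp : ∏ a ∈ S, t a = 1) :
    (4 : ℤ) ∣ (∑ a ∈ S, t a) - S.card := by
  classical
  set N := S.filter (fun a => t a = -1) with hN
  have h1 : ∑ a ∈ N, t a = -(N.card : ℤ) := by
    rw [Finset.sum_congr rfl (fun a ha => (Finset.mem_filter.mp ha).2)]
    simp [hN]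
  have hone : ∀ a ∈ S.filter (fun a => ¬ t a = -1), t a = 1 := by
    intro a ha
    have h := Finset.mem_filter.mp ha
    rcases ht a h.1 with h' | h'
    · exact h'
    · exact absurd h' h.2
  have h2 : ∑ a ∈ S.filter (fun a => ¬ t a = -1), t a
      = ((S.filter (fun a => ¬ t a = -1)).card : ℤ) := by
    rw [Finset.sum_congr rfl hone]
    simp
  have hc : N.card + (S.filter (fun a => ¬ t a = -1)).card = S.card := by
    rw [hN]; exact Finset.card_filter_add_card_filter_not _
  have hsum : ∑ a ∈ S, t a = (S.card : ℤ) - 2 * N.card := by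
    rw [← Finset.sum_filter_add_sum_filter_not S (fun a => t a = -1), h1, h2]
    push_cast [← hc]
    ring
  have hp1 : ∏ a ∈ N, t a = (-1 : ℤ) ^ N.card := by
    rw [Finset.prod_congr rfl (fun a ha => (Finset.mem_filter.mp ha).2)]
    simp [hN]
  have hp2 : ∏ a ∈ S.filter (fun a => ¬ t a = -1), t a = 1 := by
    rw [Finset.prod_congr rfl hone]
    simp
  have hpow : (-1 : ℤ) ^ N.card = 1 := by
    rw [← Finset.prod_filter_mul_prod_filter_not S (fun a => t a = -1), hp1, hp2, mul_one] at hp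
    exact hp
  have heven : Even N.card := by
    rcases Nat.even_or_odd N.card with he | ho
    · exact he
    · rw [ho.neg_one_pow] at hpow; norm_num at hpow
  obtain ⟨r, hr⟩ := heven
  rw [hsum, hr]
  push_cast
  ring_nf
  omega

/-- Reindexing a product along the cyclic shift `j ↦ (j + s') % m`. -/
lemma aux_prod_shift (m s' : ℕ) (hs : s' < m) (g : ℤ → ℤ) :
    ∏ j ∈ Finset.range m, g (((j + s') % m : ℕ) : ℤ)
      = ∏ j ∈ Finset.range m, g (j : ℤ) := by
  have hm : 0 < m := lt_of_le_of_lt (Nat.zero_le _) hs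
  refine Finset.prod_nbij' (fun j => (j + s') % m) (fun i => (i + (m - s')) % m)
    ?_ ?_ ?_ ?_ ?_
  · intro a ha
    exact Finset.mem_range.mpr (Nat.mod_lt _ hm)
  · intro a ha
    exact Finset.mem_range.mpr (Nat.mod_lt _ hm)
  · intro a ha
    have ha' := Finset.mem_range.mp ha
    show ((a + s') % m + (m - s')) % m = a
    rw [Nat.mod_add_mod]
    have h : a + s' + (m - s') = a + m := by omega
    rw [h, Nat.add_mod_right]
    exact Nat.mod_eq_of_lt ha'
  · intro a ha
    have ha' := Finset.mem_range.mp ha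
    show ((a + (m - s')) % m + s') % m = a
    rw [Nat.mod_add_mod]
    have h : a + (m - s') + s' = a + m := by omega
    rw [h, Nat.add_mod_right]
    exact Nat.mod_eq_of_lt ha'
  · intro a _
    rfl

/-- The periodic autocorrelation of a `±1` sequence of length `m` at shift
`0 < s < m` is congruent to `m` mod `4`. -/
lemma aux_keymod (m : ℕ) (g : ℤ → ℤ)
    (hg1 : ∀ j : ℤ, 0 ≤ j → j < (m : ℤ) → g j = 1 ∨ g j = -1)
    (hg0 : ∀ j : ℤ, j < 0 ∨ (m : ℤ) ≤ j → g j = 0)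
    (s : ℤ) (h0 : 0 < s) (h1 : s < (m : ℤ)) :
    (4 : ℤ) ∣ (∑ j ∈ Finset.range m,
      (g ((j : ℤ) + s) * g j + g ((j : ℤ) + s - m) * g j)) - m := by
  obtain ⟨s', rfl⟩ : ∃ n : ℕ, (n : ℤ) = s := ⟨s.toNat, Int.toNat_of_nonneg h0.le⟩
  have hs'm : s' < m := by exact_mod_cast h1
  have hs'0 : 0 < s' := by exact_mod_cast h0
  set t : ℕ → ℤ := fun j => g (((j + s') % m : ℕ) : ℤ) * g (j : ℤ) with ht
  have step1 : ∀ j ∈ Finset.range m,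
      g ((j : ℤ) + s') * g j + g ((j : ℤ) + s' - m) * g j = t j := by
    intro j hj
    have hj' := Finset.mem_range.mp hj
    rcases lt_or_ge (j + s') m with hc | hc
    · have hz : g ((j : ℤ) + s' - m) = 0 := hg0 _ (Or.inl (by omega))
      have hmod : (j + s') % m = j + s' := Nat.mod_eq_of_lt hc
      rw [hz, ht]
      simp only [hmod]
      push_cast
      ring
    · have hz : g ((j : ℤ) + s') = 0 := hg0 _ (Or.inr (by omega))
      have hmod : (j + s') % m = j + s' - m := by
        rw [Nat.mod_eq_sub_mod hc]
        exact Nat.mod_eq_of_lt (by omega)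
      have hcast : ((j + s' - m : ℕ) : ℤ) = (j : ℤ) + s' - m := by omega
      rw [hz, ht]
      simp only [hmod, hcast]
      ring
  have step2 : ∀ j ∈ Finset.range m, t j = 1 ∨ t j = -1 := by
    intro j hj
    have hj' := Finset.mem_range.mp hj
    have hlt : (j + s') % m < m := Nat.mod_lt _ (by omega)
    have e1 := hg1 (((j + s') % m : ℕ) : ℤ) (by positivity) (by exact_mod_cast hlt)
    have e2 := hg1 (j : ℤ) (by positivity) (by exact_mod_cast hj')
    have hbeta : t j = g (((j + s') % m : ℕ) : ℤ) * g (j : ℤ) := rfl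
    rw [hbeta]
    rcases e1 with e1 | e1 <;> rcases e2 with e2 | e2 <;> rw [e1, e2] <;> norm_num
  have step3 : ∏ j ∈ Finset.range m, t j = 1 := by
    have hsq : ∀ j ∈ Finset.range m, g (j : ℤ) * g (j : ℤ) = 1 := by
      intro j hj
      have hj' := Finset.mem_range.mp hj
      rcases hg1 (j : ℤ) (by positivity) (by exact_mod_cast hj') with e | e <;>
        rw [e] <;> norm_num
    calc ∏ j ∈ Finset.range m, t j
        = (∏ j ∈ Finset.range m, g (((j + s') % m : ℕ) : ℤ))
            * ∏ j ∈ Finset.range m, g (j : ℤ) := by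
          rw [ht, ← Finset.prod_mul_distrib]
      _ = ∏ j ∈ Finset.range m, (g (j : ℤ) * g (j : ℤ)) := by
            rw [aux_prod_shift m s' hs'm g, ← Finset.prod_mul_distrib]
      _ = 1 := by rw [Finset.prod_congr rfl hsq]; exact Finset.prod_const_one
  rw [Finset.sum_congr rfl step1]
  have := aux_sum_eq_card_of_prod_one (Finset.range m) t step2 step3
  rwa [Finset.card_range] at this

/-- `f s` is always even. -/
lemma aux_even (m : ℕ) (g h : ℤ → ℤ)
    (hg1 : ∀ j : ℤ, 0 ≤ j → j < (m : ℤ) → g j = 1 ∨ g j = -1)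
    (hg0 : ∀ j : ℤ, j < 0 ∨ (m : ℤ) ≤ j → g j = 0)
    (hh1 : ∀ j : ℤ, 0 ≤ j → j < (m : ℤ) → h j = 1 ∨ h j = -1)
    (hh0 : ∀ j : ℤ, j < 0 ∨ (m : ℤ) ≤ j → h j = 0)
    (s : ℤ) :
    (2 : ℤ) ∣ ((∑ j ∈ Finset.range m, g ((j : ℤ) + s) * g (j : ℤ))
        + ∑ j ∈ Finset.range m, h ((j : ℤ) + s) * h (j : ℤ)) := by
  rw [← Finset.sum_add_distrib]
  apply Finset.dvd_sum
  intro j hj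
  have hj' := Finset.mem_range.mp hj
  by_cases hc : 0 ≤ (j : ℤ) + s ∧ (j : ℤ) + s < (m : ℤ)
  · obtain ⟨c1, c2⟩ := hc
    have e1 := hg1 _ c1 c2
    have e2 := hg1 (j : ℤ) (by positivity) (by exact_mod_cast hj')
    have e3 := hh1 _ c1 c2
    have e4 := hh1 (j : ℤ) (by positivity) (by exact_mod_cast hj')
    rcases e1 with e1 | e1 <;> rcases e2 with e2 | e2 <;>
      rcases e3 with e3 | e3 <;> rcases e4 with e4 | e4 <;>
      rw [e1, e2, e3, e4] <;> norm_num
  · have hor : (j : ℤ) + s < 0 ∨ (m : ℤ) ≤ (j : ℤ) + s := by omega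
    rw [hg0 _ hor, hh0 _ hor]
    simp

theorem near_complementary_odd_characterization (m : ℕ) (hodd : Odd m) (hm : 2 < m)
    (g h : ℤ → ℤ)
    (hg1 : ∀ j : ℤ, 0 ≤ j → j < (m : ℤ) → g j = 1 ∨ g j = -1)
    (hg0 : ∀ j : ℤ, j < 0 ∨ (m : ℤ) ≤ j → g j = 0)
    (hh1 : ∀ j : ℤ, 0 ≤ j → j < (m : ℤ) → h j = 1 ∨ h j = -1)
    (hh0 : ∀ j : ℤ, j < 0 ∨ (m : ℤ) ≤ j → h j = 0)
    (f : ℤ → ℤ)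
    (hf : ∀ s : ℤ, f s = (∑ j ∈ Finset.range m, g ((j : ℤ) + s) * g (j : ℤ))
        + ∑ j ∈ Finset.range m, h ((j : ℤ) + s) * h (j : ℤ))
    (hbound : ∀ s : ℤ, s ≠ 0 → |f s| ≤ 2)
    (hnotgolay : ¬ (∀ s : ℤ, s ≠ 0 → f s = 0)) :
    ∀ s : ℤ, 0 < s → s < (m : ℤ) →
      (|f s| = 0 ∧ |f (s - m)| = 2) ∨ (|f s| = 2 ∧ |f (s - m)| = 0) := by
  intro s hs0 hsm
  -- evenness
  have heven1 : (2 : ℤ) ∣ f s := by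
    rw [hf]; exact aux_even m g h hg1 hg0 hh1 hh0 s
  have heven2 : (2 : ℤ) ∣ f (s - m) := by
    rw [hf]; exact aux_even m g h hg1 hg0 hh1 hh0 (s - m)
  -- bounds
  have hb1 : -2 ≤ f s ∧ f s ≤ 2 := abs_le.mp (hbound s (by omega))
  have hb2 : -2 ≤ f (s - m) ∧ f (s - m) ≤ 2 := abs_le.mp (hbound (s - m) (by omega))
  -- key mod 4 identity
  have hkg := aux_keymod m g hg1 hg0 s hs0 hsm
  have hkh := aux_keymod m h hh1 hh0 s hs0 hsm
  have hsum_eq : f s + f (s - m)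
      = (∑ j ∈ Finset.range m, (g ((j : ℤ) + s) * g j + g ((j : ℤ) + s - m) * g j))
        + (∑ j ∈ Finset.range m, (h ((j : ℤ) + s) * h j + h ((j : ℤ) + s - m) * h j)) := by
    rw [hf s, hf (s - m)]
    rw [Finset.sum_add_distrib, Finset.sum_add_distrib]
    have eg : ∑ j ∈ Finset.range m, g ((j : ℤ) + (s - m)) * g (j : ℤ)
        = ∑ j ∈ Finset.range m, g ((j : ℤ) + s - m) * g (j : ℤ) :=
      Finset.sum_congr rfl (fun j _ => by rw [show (j : ℤ) + (s - m) = (j : ℤ) + s - m by ring])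
    have eh : ∑ j ∈ Finset.range m, h ((j : ℤ) + (s - m)) * h (j : ℤ)
        = ∑ j ∈ Finset.range m, h ((j : ℤ) + s - m) * h (j : ℤ) :=
      Finset.sum_congr rfl (fun j _ => by rw [show (j : ℤ) + (s - m) = (j : ℤ) + s - m by ring])
    rw [eg, eh]
    ring
  have hkey : (4 : ℤ) ∣ (f s + f (s - m)) - 2 * m := by
    rw [hsum_eq]
    obtain ⟨a, ha⟩ := hkg
    obtain ⟨b, hb⟩ := hkh
    refine ⟨a + b, ?_⟩
    linarith
  obtain ⟨k, hk⟩ := hodd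
  have hkz : (m : ℤ) = 2 * k + 1 := by exact_mod_cast hk
  have hcases : (f s = 0 ∧ (f (s - m) = 2 ∨ f (s - m) = -2)) ∨
      ((f s = 2 ∨ f s = -2) ∧ f (s - m) = 0) := by omega
  rcases hcases with ⟨h1, h2 | h2⟩ | ⟨h1 | h1, h2⟩
  · left; rw [h1, h2]; norm_num
  · left; rw [h1, h2]; norm_num
  · right; rw [h1, h2]; norm_num
  · right; rw [h1, h2]; norm_num
end

section
/- Let g be a binary sequence of length m+1 and h a binary sequence of length m with m > 0, with f_s = C_{g,g}(s) + C_{h,h}(s). If |f_s| ≤ 1 for every nonzero s, then |f_s| = 1 for every s with 0 < |s| ≤ m; in particular (g,h) is not a Golay complementary pair. -/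
lemma near_comp_aux (u : ℤ → ℤ) (n : ℕ) (s : ℤ)
    (hu1 : ∀ j : ℤ, 0 ≤ j → j < (n : ℤ) → u j = 1 ∨ u j = -1)
    (hu0 : ∀ j : ℤ, j < 0 ∨ (n : ℤ) ≤ j → u j = 0)
    (t : ℕ) (hts : s = (t : ℤ) ∨ s = -(t : ℤ)) (htn : t ≤ n) :
    ((∑ j ∈ Finset.range n, u ((j : ℤ) + s) * u (j : ℤ) : ℤ) : ZMod 2)
      = ((n - t : ℕ) : ZMod 2) := by
  push_cast
  have key : ∀ j ∈ Finset.range n,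
      ((u ((j : ℤ) + s) : ZMod 2) * (u (j : ℤ) : ZMod 2))
        = if 0 ≤ (j : ℤ) + s ∧ (j : ℤ) + s < (n : ℤ) then 1 else 0 := by
    intro j hj
    simp only [Finset.mem_range] at hj
    by_cases hP : 0 ≤ (j : ℤ) + s ∧ (j : ℤ) + s < (n : ℤ)
    · rcases hu1 _ hP.1 hP.2 with h1 | h1 <;>
      rcases hu1 (j : ℤ) (by positivity) (by exact_mod_cast hj) with h2 | h2 <;>
      simp [h1, h2, hP] <;> decide
    · have h0 : u ((j : ℤ) + s) = 0 := hu0 _ (by omega)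
      simp [h0, hP]
  rw [Finset.sum_congr rfl key, Finset.sum_boole]
  rcases hts with rfl | rfl
  · have hfil : (Finset.range n).filter
        (fun j : ℕ => 0 ≤ (j : ℤ) + (t : ℤ) ∧ (j : ℤ) + (t : ℤ) < (n : ℤ))
        = Finset.range (n - t) := by
      ext a
      simp only [Finset.mem_filter, Finset.mem_range]
      omega
    rw [hfil, Finset.card_range]
  · have hfil : (Finset.range n).filter
        (fun j : ℕ => 0 ≤ (j : ℤ) + -(t : ℤ) ∧ (j : ℤ) + -(t : ℤ) < (n : ℤ))
        = Finset.Ico t n := by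
      ext a
      simp only [Finset.mem_filter, Finset.mem_range, Finset.mem_Ico]
      omega
    rw [hfil, Nat.card_Ico]

theorem near_complementary_uneven_characterization (m : ℕ) (hm : 0 < m)
    (g h : ℤ → ℤ)
    (hg1 : ∀ j : ℤ, 0 ≤ j → j < (m : ℤ) + 1 → g j = 1 ∨ g j = -1)
    (hg0 : ∀ j : ℤ, j < 0 ∨ (m : ℤ) + 1 ≤ j → g j = 0)
    (hh1 : ∀ j : ℤ, 0 ≤ j → j < (m : ℤ) → h j = 1 ∨ h j = -1)
    (hh0 : ∀ j : ℤ, j < 0 ∨ (m : ℤ) ≤ j → h j = 0)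
    (f : ℤ → ℤ)
    (hf : ∀ s : ℤ, f s = (∑ j ∈ Finset.range (m + 1), g ((j : ℤ) + s) * g (j : ℤ))
        + ∑ j ∈ Finset.range m, h ((j : ℤ) + s) * h (j : ℤ))
    (hbound : ∀ s : ℤ, s ≠ 0 → |f s| ≤ 1) :
    (∀ s : ℤ, 0 < |s| → |s| ≤ (m : ℤ) → |f s| = 1) ∧
    ¬ (∀ s : ℤ, s ≠ 0 → f s = 0) := by
  have key : ∀ s : ℤ, 0 < |s| → |s| ≤ (m : ℤ) → |f s| = 1 := by
    intro s hs1 hs2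
    set t := s.natAbs with htdef
    have hts : s = (t : ℤ) ∨ s = -(t : ℤ) := Int.natAbs_eq s
    have habs : |s| = (t : ℤ) := Int.abs_eq_natAbs s
    have htm : t ≤ m := by omega
    have ht0 : 0 < t := by omega
    have hgsum := near_comp_aux g (m + 1) s
      (by intro j h1 h2; exact hg1 j h1 (by push_cast at h2; omega))
      (by intro j hj; exact hg0 j (by push_cast at hj ⊢; omega)) t hts (by omega)
    have hhsum := near_comp_aux h m s hh1 hh0 t hts htm
    have hcast : ((f s : ℤ) : ZMod 2) = 1 := by
      rw [hf s]
      push_cast at hgsum hhsum ⊢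
      rw [hgsum, hhsum]
      have h1 : m + 1 - t = (m - t) + 1 := by omega
      rw [h1, Nat.cast_add, Nat.cast_one]
      ring_nf
      have h2 : ((m - t : ℕ) : ZMod 2) * 2 = 0 := by
        rw [show (2 : ZMod 2) = 0 from rfl, mul_zero]
      rw [h2, add_zero]
    have hne : f s ≠ 0 := by
      intro h0
      rw [h0] at hcast
      simp at hcast
    have hb := hbound s (by intro h0; rw [h0] at hs1; simp at hs1)
    rw [abs_le] at hb
    rcases abs_cases (f s) with ⟨heq, _⟩ | ⟨heq, _⟩ <;> omega
  refine ⟨key, fun hall => ?_⟩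
  have h1 := key (m : ℤ) (by simp [abs_of_nonneg]; omega) (by simp [abs_of_nonneg])
  rw [hall (m : ℤ) (by exact_mod_cast hm.ne')] at h1
  simp at h1
end

section
/- Let g and h be binary sequences of odd length m > 1, with f_s = C_{g,g}(s) + C_{h,h}(s). Then Σ_{s∈ℤ} f_s² ≥ (2m)² + 4(m-1). -/
open Finset

/-- Sum and product of a ±1-valued function over a finset. -/
lemma aux_pm_sum (t : Finset ℤ) (x : ℤ → ℤ)
    (hx : ∀ i ∈ t, x i = 1 ∨ x i = -1) :
    ∃ k : ℕ, (∑ i ∈ t, x i) = (t.card : ℤ) - 2 * k ∧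
      (∏ i ∈ t, x i) = (-1) ^ k := by
  classical
  have hval : ∀ i ∈ t.filter (fun i => ¬ x i = -1), x i = 1 := by
    intro i hi
    rcases hx i (Finset.mem_filter.mp hi).1 with h | h
    · exact h
    · exact absurd h (Finset.mem_filter.mp hi).2
  have h3 := Finset.card_filter_add_card_filter_not (s := t)
    (p := fun i => x i = -1)
  refine ⟨(t.filter (fun i => x i = -1)).card, ?_, ?_⟩
  · rw [← Finset.sum_filter_add_sum_filter_not t (fun i => x i = -1)]
    have h1 : ∑ i ∈ t.filter (fun i => x i = -1), x i
        = ∑ _i ∈ t.filter (fun i => x i = -1), (-1 : ℤ) :=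
      Finset.sum_congr rfl (fun i hi => (Finset.mem_filter.mp hi).2)
    have h2 : ∑ i ∈ t.filter (fun i => ¬ x i = -1), x i
        = ∑ _i ∈ t.filter (fun i => ¬ x i = -1), (1 : ℤ) :=
      Finset.sum_congr rfl hval
    rw [h1, h2, Finset.sum_const, Finset.sum_const]
    simp only [nsmul_eq_mul, mul_neg, mul_one]
    omega
  · rw [← Finset.prod_filter_mul_prod_filter_not t (fun i => x i = -1)]
    have h1 : ∏ i ∈ t.filter (fun i => x i = -1), x i
        = ∏ _i ∈ t.filter (fun i => x i = -1), (-1 : ℤ) :=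
      Finset.prod_congr rfl (fun i hi => (Finset.mem_filter.mp hi).2)
    have h2 : ∏ i ∈ t.filter (fun i => ¬ x i = -1), x i
        = ∏ _i ∈ t.filter (fun i => ¬ x i = -1), (1 : ℤ) :=
      Finset.prod_congr rfl hval
    rw [h1, h2, Finset.prod_const, Finset.prod_const, one_pow, mul_one]

/-- Casting a `range` sum to an integer-interval sum. -/
lemma aux_cast (m : ℕ) (F : ℤ → ℤ) :
    ∑ j ∈ Finset.range m, F (j : ℤ) = ∑ j ∈ Finset.Icc (0 : ℤ) ((m : ℤ) - 1), F j := by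
  refine Finset.sum_nbij' (fun n : ℕ => (n : ℤ)) Int.toNat ?_ ?_ ?_ ?_ ?_
  · intro a ha
    simp only [Finset.mem_range] at ha
    simp only [Finset.mem_Icc]
    omega
  · intro a ha
    simp only [Finset.mem_Icc] at ha
    simp only [Finset.mem_range]
    omega
  · intro a _; simp
  · intro a ha
    simp only [Finset.mem_Icc] at ha
    exact Int.toNat_of_nonneg ha.1
  · intro a _; rfl

/-- Extending/restricting a correlation-type sum using the support of `b`. -/
lemma aux_ext (m : ℕ) (b : ℤ → ℤ) (hb0 : ∀ j : ℤ, j < 0 ∨ (m : ℤ) ≤ j → b j = 0)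
    (T : Finset ℤ) (hT : Finset.Icc (0 : ℤ) ((m : ℤ) - 1) ⊆ T) (F : ℤ → ℤ) :
    ∑ j ∈ T, F j * b j = ∑ j ∈ Finset.Icc (0 : ℤ) ((m : ℤ) - 1), F j * b j := by
  refine (Finset.sum_subset hT (fun j _ hj => ?_)).symm
  simp only [Finset.mem_Icc, not_and_or, not_le] at hj
  have : b j = 0 := hb0 j (by omega)
  rw [this, mul_zero]

theorem sum_sq_lower_bound_odd (m : ℕ) (hodd : Odd m) (hm : 1 < m)
    (g h : ℤ → ℤ)
    (hg1 : ∀ j : ℤ, 0 ≤ j → j < (m : ℤ) → g j = 1 ∨ g j = -1)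
    (hg0 : ∀ j : ℤ, j < 0 ∨ (m : ℤ) ≤ j → g j = 0)
    (hh1 : ∀ j : ℤ, 0 ≤ j → j < (m : ℤ) → h j = 1 ∨ h j = -1)
    (hh0 : ∀ j : ℤ, j < 0 ∨ (m : ℤ) ≤ j → h j = 0)
    (f : ℤ → ℤ)
    (hf : ∀ s : ℤ, f s = (∑ j ∈ Finset.range m, g ((j : ℤ) + s) * g (j : ℤ))
        + ∑ j ∈ Finset.range m, h ((j : ℤ) + s) * h (j : ℤ)) :
    (2 * (m : ℤ)) ^ 2 + 4 * ((m : ℤ) - 1) ≤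
      ∑ s ∈ Finset.Icc (-(m : ℤ)) (m : ℤ), (f s) ^ 2 := by
  set M : ℤ := (m : ℤ) with hM
  have hM1 : 1 < M := by rw [hM]; exact_mod_cast hm
  -- correlation over integer interval
  set C : (ℤ → ℤ) → ℤ → ℤ := fun a s => ∑ j ∈ Finset.Icc (0 : ℤ) (M - 1), a (j + s) * a j
    with hC
  have hfC : ∀ s, f s = C g s + C h s := by
    intro s
    rw [hf s, hC]
    congr 1
    · exact aux_cast m (fun j => g (j + s) * g j)
    · exact aux_cast m (fun j => h (j + s) * h j)
  -- restriction of correlation sums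
  have restrict : ∀ (a : ℤ → ℤ), (∀ j : ℤ, j < 0 ∨ M ≤ j → a j = 0) →
      ∀ s : ℤ, 0 ≤ s → C a s = ∑ j ∈ Finset.Icc (0 : ℤ) (M - s - 1), a (j + s) * a j := by
    intro a ha0 s hs
    refine (Finset.sum_subset (by intro j hj; simp only [Finset.mem_Icc] at *; omega)
      (fun j hj hj' => ?_)).symm
    simp only [Finset.mem_Icc, not_and_or, not_le] at hj hj'
    have : a (j + s) = 0 := ha0 _ (by omega)
    rw [this, zero_mul]
  -- symmetry: C a (-s) = C a s for 0 ≤ s ≤ M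
  have symm : ∀ (a : ℤ → ℤ), (∀ j : ℤ, j < 0 ∨ M ≤ j → a j = 0) →
      ∀ s : ℤ, 0 ≤ s → s ≤ M → C a (-s) = C a s := by
    intro a ha0 s hs hsM
    have e1 : C a (-s) = ∑ j ∈ Finset.Icc (-M) (2 * M), a (j + -s) * a j :=
      (aux_ext m a ha0 _ (by intro j hj; simp only [Finset.mem_Icc] at *; omega) _).symm
    have e2 : Finset.Icc (-M) (2 * M)
        = (Finset.Icc (-M - s) (2 * M - s)).map (addRightEmbedding s) := by
      rw [Finset.map_add_right_Icc]; congr 1 <;> ring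
    rw [e1, e2, Finset.sum_map]
    have e3 : ∀ k ∈ Finset.Icc (-M - s) (2 * M - s),
        a (addRightEmbedding s k + -s) * a (addRightEmbedding s k)
          = a (k + s) * a k := by
      intro k _
      simp only [addRightEmbedding_apply]
      rw [mul_comm]
      congr 2
      ring
    rw [Finset.sum_congr rfl e3]
    exact aux_ext m a ha0 _ (by intro j hj; simp only [Finset.mem_Icc] at *; omega) _
  -- parity: C a s ≡ M - s [ZMOD 2] for 0 ≤ s ≤ M
  have parity : ∀ (a : ℤ → ℤ), (∀ j : ℤ, 0 ≤ j → j < M → a j = 1 ∨ a j = -1) →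
      (∀ j : ℤ, j < 0 ∨ M ≤ j → a j = 0) →
      ∀ s : ℤ, 0 ≤ s → s ≤ M → (C a s) % 2 = (M - s) % 2 := by
    intro a ha1 ha0 s hs hsM
    rw [restrict a ha0 s hs]
    obtain ⟨k, hk, -⟩ := aux_pm_sum (Finset.Icc (0 : ℤ) (M - s - 1))
      (fun j => a (j + s) * a j) (by
        intro j hj
        simp only [Finset.mem_Icc] at hj
        rcases ha1 (j + s) (by omega) (by omega) with h1 | h1 <;>
          rcases ha1 j (by omega) (by omega) with h2 | h2 <;>
            simp [h1, h2])
    have hcard : ((Finset.Icc (0 : ℤ) (M - s - 1)).card : ℤ) = M - s := by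
      rw [Int.card_Icc_of_le _ _ (by omega)]; ring
    rw [hk, hcard]
    omega
  -- periodic correlation mod 4
  have periodic : ∀ (a : ℤ → ℤ), (∀ j : ℤ, 0 ≤ j → j < M → a j = 1 ∨ a j = -1) →
      (∀ j : ℤ, j < 0 ∨ M ≤ j → a j = 0) →
      ∀ s : ℤ, 1 ≤ s → s ≤ M - 1 → (C a s + C a (M - s)) % 4 = M % 4 := by
    intro a ha1 ha0 s hs hsM
    have key : C a s + C a (M - s)
        = ∑ j ∈ Finset.Icc (0 : ℤ) (M - 1), a ((j + s) % M) * a j := by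
      have split : Finset.Icc (0 : ℤ) (M - 1)
          = Finset.Icc (0 : ℤ) (M - s - 1) ∪ Finset.Icc (M - s) (M - 1) := by
        ext j
        simp only [Finset.mem_union, Finset.mem_Icc]
        omega
      have hdisj : Disjoint (Finset.Icc (0 : ℤ) (M - s - 1)) (Finset.Icc (M - s) (M - 1)) := by
        rw [Finset.disjoint_left]
        intro j hj hj'
        simp only [Finset.mem_Icc] at hj hj'
        omega
      rw [split, Finset.sum_union hdisj]
      have p1 : ∑ j ∈ Finset.Icc (0 : ℤ) (M - s - 1), a ((j + s) % M) * a j = C a s := by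
        rw [restrict a ha0 s (by omega)]
        refine Finset.sum_congr rfl (fun j hj => ?_)
        simp only [Finset.mem_Icc] at hj
        rw [Int.emod_eq_of_lt (by omega) (by omega)]
      have p2 : ∑ j ∈ Finset.Icc (M - s) (M - 1), a ((j + s) % M) * a j = C a (M - s) := by
        rw [restrict a ha0 (M - s) (by omega)]
        have e2 : Finset.Icc (M - s) (M - 1)
            = (Finset.Icc (0 : ℤ) (s - 1)).map (addRightEmbedding (M - s)) := by
          rw [Finset.map_add_right_Icc]; congr 1 <;> ring
        rw [e2, Finset.sum_map]
        have : M - (M - s) - 1 = s - 1 := by ring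
        rw [this]
        refine Finset.sum_congr rfl (fun k hk => ?_)
        simp only [Finset.mem_Icc] at hk
        simp only [addRightEmbedding_apply]
        have harg : (k + (M - s) + s) % M = k := by
          have : k + (M - s) + s = k + 1 * M := by ring
          rw [this, Int.add_mul_emod_self_right]
          exact Int.emod_eq_of_lt (by omega) (by omega)
        rw [harg, mul_comm]
      rw [p1, p2]
    rw [key]
    -- each term is ±1 and the product of all terms is 1
    obtain ⟨k, hk, hprod⟩ := aux_pm_sum (Finset.Icc (0 : ℤ) (M - 1))
      (fun j => a ((j + s) % M) * a j) (by
        intro j hj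
        simp only [Finset.mem_Icc] at hj
        have h1 := ha1 ((j + s) % M) (Int.emod_nonneg _ (by omega))
          (Int.emod_lt_of_pos _ (by omega))
        have h2 := ha1 j (by omega) (by omega)
        rcases h1 with h1 | h1 <;> rcases h2 with h2 | h2 <;> simp [h1, h2])
    have hprod1 : (∏ j ∈ Finset.Icc (0 : ℤ) (M - 1), a ((j + s) % M) * a j) = 1 := by
      rw [Finset.prod_mul_distrib]
      have hbij : ∏ j ∈ Finset.Icc (0 : ℤ) (M - 1), a ((j + s) % M)
          = ∏ j ∈ Finset.Icc (0 : ℤ) (M - 1), a j := by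
        refine Finset.prod_nbij' (fun j => (j + s) % M) (fun j => (j - s) % M) ?_ ?_ ?_ ?_ ?_
        · intro j hj
          simp only [Finset.mem_Icc]
          have := Int.emod_nonneg (j + s) (show M ≠ 0 by omega)
          have := Int.emod_lt_of_pos (j + s) (show 0 < M by omega)
          omega
        · intro j hj
          simp only [Finset.mem_Icc]
          have := Int.emod_nonneg (j - s) (show M ≠ 0 by omega)
          have := Int.emod_lt_of_pos (j - s) (show 0 < M by omega)
          omega
        · intro j hj
          simp only [Finset.mem_Icc] at hj
          show ((j + s) % M - s) % M = j
          have e : ((j + s) % M - s) % M = (j + s - s) % M := by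
            rw [Int.sub_emod, Int.emod_emod_of_dvd _ dvd_rfl, ← Int.sub_emod]
          rw [e, add_sub_cancel_right]
          exact Int.emod_eq_of_lt (by omega) (by omega)
        · intro j hj
          simp only [Finset.mem_Icc] at hj
          show ((j - s) % M + s) % M = j
          have e : ((j - s) % M + s) % M = (j - s + s) % M := by
            rw [Int.add_emod, Int.emod_emod_of_dvd _ dvd_rfl, ← Int.add_emod]
          rw [e, sub_add_cancel]
          exact Int.emod_eq_of_lt (by omega) (by omega)
        · intro j _; rfl
      rw [hbij, ← Finset.prod_mul_distrib]
      have : ∀ j ∈ Finset.Icc (0 : ℤ) (M - 1), a j * a j = 1 := by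
        intro j hj
        simp only [Finset.mem_Icc] at hj
        rcases ha1 j (by omega) (by omega) with h1 | h1 <;> simp [h1]
      rw [Finset.prod_congr rfl this, Finset.prod_const_one]
    rw [hprod1] at hprod
    have hkeven : Even k := by
      rcases Nat.even_or_odd k with he | ho
      · exact he
      · rw [Odd.neg_one_pow ho] at hprod; omega
    obtain ⟨j, hj⟩ := hkeven
    have hcard : ((Finset.Icc (0 : ℤ) (M - 1)).card : ℤ) = M :=
      by rw [Int.card_Icc_of_le _ _ (by omega)]; ring
    rw [hk, hcard]
    omega
  -- value at 0
  have hC0 : ∀ (a : ℤ → ℤ), (∀ j : ℤ, 0 ≤ j → j < M → a j = 1 ∨ a j = -1) → C a 0 = M := by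
    intro a ha1
    have : ∀ j ∈ Finset.Icc (0 : ℤ) (M - 1), a (j + 0) * a j = 1 := by
      intro j hj
      simp only [Finset.mem_Icc] at hj
      rcases ha1 j (by omega) (by omega) with h1 | h1 <;> simp [h1]
    simp only [hC]
    rw [Finset.sum_congr rfl this, Finset.sum_const, nsmul_eq_mul, mul_one,
      Int.card_Icc_of_le _ _ (by omega)]
    ring
  have hf0 : f 0 = 2 * M := by
    rw [hfC 0, hC0 g hg1, hC0 h hh1]; ring
  -- evenness of f
  have hfeven : ∀ s : ℤ, 0 ≤ s → s ≤ M → f s % 2 = 0 := by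
    intro s hs hsM
    have p1 := parity g hg1 hg0 s hs hsM
    have p2 := parity h hh1 hh0 s hs hsM
    rw [hfC s]
    omega
  -- pair congruence mod 4
  have hmodM : (2 * M) % 4 = 2 := by
    obtain ⟨t, ht⟩ := hodd
    have : M = 2 * (t : ℤ) + 1 := by rw [hM]; exact_mod_cast ht
    omega
  have hpair : ∀ s : ℤ, 1 ≤ s → s ≤ M - 1 → (4 : ℤ) ≤ f s ^ 2 + f (M - s) ^ 2 := by
    intro s hs hsM
    have p1 := periodic g hg1 hg0 s hs hsM
    have p2 := periodic h hh1 hh0 s hs hsM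
    have e1 := hfeven s (by omega) (by omega)
    have e2 := hfeven (M - s) (by omega) (by omega)
    have e3 : (f s + f (M - s)) % 4 = 2 := by
      rw [hfC s, hfC (M - s)]
      omega
    obtain ⟨c, hc⟩ : ∃ c, f s = 2 * c := ⟨f s / 2, by omega⟩
    obtain ⟨d, hd⟩ : ∃ d, f (M - s) = 2 * d := ⟨f (M - s) / 2, by omega⟩
    rw [hc, hd] at e3 ⊢
    have hcd : ¬ (c = 0 ∧ d = 0) := by omega
    rcases not_and_or.mp hcd with hne | hne
    · have h1 : 1 ≤ c ^ 2 := by rcases lt_or_gt_of_ne hne with h' | h' <;> nlinarith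
      nlinarith [sq_nonneg d]
    · have h1 : 1 ≤ d ^ 2 := by rcases lt_or_gt_of_ne hne with h' | h' <;> nlinarith
      nlinarith [sq_nonneg c]
  -- symmetry of f
  have hfsymm : ∀ s : ℤ, 0 ≤ s → s ≤ M → f (-s) = f s := by
    intro s hs hsM
    rw [hfC (-s), hfC s, symm g hg0 s hs hsM, symm h hh0 s hs hsM]
  -- sum over the middle part
  have hS1 : 2 * (M - 1) ≤ ∑ s ∈ Finset.Icc (1 : ℤ) (M - 1), f s ^ 2 := by
    have hrev : ∑ s ∈ Finset.Icc (1 : ℤ) (M - 1), f (M - s) ^ 2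
        = ∑ s ∈ Finset.Icc (1 : ℤ) (M - 1), f s ^ 2 := by
      refine Finset.sum_nbij' (fun s => M - s) (fun s => M - s) ?_ ?_ ?_ ?_ ?_
      · intro a ha; simp only [Finset.mem_Icc] at *; omega
      · intro a ha; simp only [Finset.mem_Icc] at *; omega
      · intro a _; show M - (M - a) = a; omega
      · intro a _; show M - (M - a) = a; omega
      · intro a _; rfl
    have hsum : (M - 1) * 4 ≤ ∑ s ∈ Finset.Icc (1 : ℤ) (M - 1), (f s ^ 2 + f (M - s) ^ 2) := by
      have c1 : ((Finset.Icc (1 : ℤ) (M - 1)).card : ℤ) = M - 1 := by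
        rw [Int.card_Icc_of_le _ _ (by omega)]; ring
      calc (M - 1) * 4 = ∑ _s ∈ Finset.Icc (1 : ℤ) (M - 1), (4 : ℤ) := by
            rw [Finset.sum_const, nsmul_eq_mul, c1]
        _ ≤ _ := Finset.sum_le_sum (fun s hs => by
            simp only [Finset.mem_Icc] at hs
            exact hpair s hs.1 hs.2)
    rw [Finset.sum_add_distrib, hrev] at hsum
    omega
  -- split the full sum
  have hsplit : Finset.Icc (-M) M
      = (Finset.Icc (-M) (-1) ∪ Finset.Icc (0 : ℤ) 0) ∪ (Finset.Icc (1 : ℤ) (M - 1) ∪ Finset.Icc M M) := by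
    ext j
    simp only [Finset.mem_union, Finset.mem_Icc]
    omega
  have d1 : Disjoint (Finset.Icc (-M) (-1)) (Finset.Icc (0 : ℤ) 0) := by
    rw [Finset.disjoint_left]; intro j hj hj'
    simp only [Finset.mem_Icc] at hj hj'; omega
  have d2 : Disjoint (Finset.Icc (1 : ℤ) (M - 1)) (Finset.Icc M M) := by
    rw [Finset.disjoint_left]; intro j hj hj'
    simp only [Finset.mem_Icc] at hj hj'; omega
  have d3 : Disjoint (Finset.Icc (-M) (-1) ∪ Finset.Icc (0 : ℤ) 0)
      (Finset.Icc (1 : ℤ) (M - 1) ∪ Finset.Icc M M) := by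
    rw [Finset.disjoint_left]; intro j hj hj'
    simp only [Finset.mem_union, Finset.mem_Icc] at hj hj'; omega
  rw [hsplit, Finset.sum_union d3, Finset.sum_union d1, Finset.sum_union d2]
  have hA : ∑ s ∈ Finset.Icc (-M) (-1), f s ^ 2 = ∑ s ∈ Finset.Icc (1 : ℤ) M, f s ^ 2 := by
    have : ∑ s ∈ Finset.Icc (-M) (-1), f s ^ 2
        = ∑ s ∈ Finset.Icc (1 : ℤ) M, f (-s) ^ 2 := by
      refine Finset.sum_nbij' (fun s => -s) (fun s => -s) ?_ ?_ ?_ ?_ ?_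
      · intro a ha; simp only [Finset.mem_Icc] at *; omega
      · intro a ha; simp only [Finset.mem_Icc] at *; omega
      · intro a _; show -(-a) = a; omega
      · intro a _; show -(-a) = a; omega
      · intro a _; simp
    rw [this]
    refine Finset.sum_congr rfl (fun s hs => ?_)
    simp only [Finset.mem_Icc] at hs
    rw [hfsymm s (by omega) (by omega)]
  have hA' : ∑ s ∈ Finset.Icc (1 : ℤ) (M - 1), f s ^ 2 ≤ ∑ s ∈ Finset.Icc (1 : ℤ) M, f s ^ 2 :=
    Finset.sum_le_sum_of_subset_of_nonneg
      (by intro j hj; simp only [Finset.mem_Icc] at *; omega)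
      (fun j _ _ => sq_nonneg _)
  have hB : ∑ s ∈ Finset.Icc (0 : ℤ) 0, f s ^ 2 = (2 * M) ^ 2 := by
    rw [Finset.Icc_self, Finset.sum_singleton, hf0]
  have hD : (0 : ℤ) ≤ ∑ s ∈ Finset.Icc M M, f s ^ 2 := by
    rw [Finset.Icc_self, Finset.sum_singleton]; exact sq_nonneg _
  rw [hA, hB]
  linarith [hA', hD, hS1]
end

section
/- Let g be a binary sequence of length m+1 and h a binary sequence of length m with m > 0, and let f_s = C_{g,g}(s) + C_{h,h}(s). Then Σ_{s∈ℤ} f_s² ≥ (2m+1)² + 2m, with equality if and only if |f_s| = 1 for all s with 0 < |s| ≤ m. -/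
lemma cast_shift_sum_pos (u : ℤ → ℤ) (n : ℕ)
    (hu1 : ∀ j : ℤ, 0 ≤ j → j < (n : ℤ) → u j = 1 ∨ u j = -1)
    (hu0 : ∀ j : ℤ, j < 0 ∨ (n : ℤ) ≤ j → u j = 0)
    (t : ℕ) (ht : t ≤ n) :
    ((∑ j ∈ Finset.range n, u ((j : ℤ) + t) * u (j : ℤ) : ℤ) : ZMod 2)
      = ((n - t : ℕ) : ZMod 2) := by
  have hsub : Finset.range (n - t) ⊆ Finset.range n :=
    Finset.range_subset_range.2 (Nat.sub_le n t)
  have hz : ∀ j ∈ Finset.range n, j ∉ Finset.range (n - t) →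
      u ((j : ℤ) + t) * u (j : ℤ) = 0 := by
    intro j hj hjk
    simp only [Finset.mem_range, not_lt] at hj hjk
    have : (n : ℤ) ≤ (j : ℤ) + t := by exact_mod_cast by omega
    rw [hu0 _ (Or.inr this)]; ring
  rw [← Finset.sum_subset hsub hz]
  push_cast
  have hterm : ∀ j ∈ Finset.range (n - t),
      ((u ((j : ℤ) + t) : ZMod 2)) * ((u (j : ℤ) : ZMod 2)) = 1 := by
    intro j hj
    simp only [Finset.mem_range] at hj
    have h1 : u ((j : ℤ) + t) = 1 ∨ u ((j : ℤ) + t) = -1 := by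
      apply hu1 <;> [positivity; exact_mod_cast by omega]
    have h2 : u (j : ℤ) = 1 ∨ u (j : ℤ) = -1 := by
      apply hu1 <;> [positivity; exact_mod_cast by omega]
    rcases h1 with h1 | h1 <;> rcases h2 with h2 | h2 <;> rw [h1, h2] <;> decide
  rw [Finset.sum_congr rfl hterm, Finset.sum_const, Finset.card_range,
    nsmul_eq_mul, mul_one]

lemma cast_shift_sum_neg (u : ℤ → ℤ) (n : ℕ)
    (hu1 : ∀ j : ℤ, 0 ≤ j → j < (n : ℤ) → u j = 1 ∨ u j = -1)
    (hu0 : ∀ j : ℤ, j < 0 ∨ (n : ℤ) ≤ j → u j = 0)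
    (t : ℕ) (ht : t ≤ n) :
    ((∑ j ∈ Finset.range n, u ((j : ℤ) - t) * u (j : ℤ) : ℤ) : ZMod 2)
      = ((n - t : ℕ) : ZMod 2) := by
  rw [Finset.range_eq_Ico, ← Finset.sum_Ico_consecutive _ (Nat.zero_le t) ht]
  have hz : ∑ j ∈ Finset.Ico 0 t, u ((j : ℤ) - t) * u (j : ℤ) = 0 := by
    apply Finset.sum_eq_zero
    intro j hj
    simp only [Finset.mem_Ico] at hj
    have : (j : ℤ) - t < 0 := by omega
    rw [hu0 _ (Or.inl this)]; ring
  rw [hz, zero_add]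
  push_cast
  have hterm : ∀ j ∈ Finset.Ico t n,
      ((u ((j : ℤ) - t) : ZMod 2)) * ((u (j : ℤ) : ZMod 2)) = 1 := by
    intro j hj
    simp only [Finset.mem_Ico] at hj
    have h1 : u ((j : ℤ) - t) = 1 ∨ u ((j : ℤ) - t) = -1 := by
      apply hu1 <;> omega
    have h2 : u (j : ℤ) = 1 ∨ u (j : ℤ) = -1 := by
      apply hu1 <;> [positivity; exact_mod_cast by omega]
    rcases h1 with h1 | h1 <;> rcases h2 with h2 | h2 <;> rw [h1, h2] <;> decide
  rw [Finset.sum_congr rfl hterm, Finset.sum_const, Nat.card_Ico,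
    nsmul_eq_mul, mul_one]

lemma int_sq_eq_one_iff_abs (a : ℤ) : a ^ 2 = 1 ↔ |a| = 1 := by
  constructor
  · intro h
    have h' : (a - 1) * (a + 1) = 0 := by ring_nf; linarith [h]
    rcases mul_eq_zero.1 h' with h1 | h1
    · rw [show a = 1 by omega]; norm_num
    · rw [show a = -1 by omega]; norm_num
  · intro h
    rcases abs_eq (by norm_num : (0:ℤ) ≤ 1) |>.1 h with h1 | h1 <;> rw [h1] <;> norm_num

theorem sum_sq_lower_bound_uneven (m : ℕ) (hm : 0 < m)
    (g h : ℤ → ℤ)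
    (hg1 : ∀ j : ℤ, 0 ≤ j → j < (m : ℤ) + 1 → g j = 1 ∨ g j = -1)
    (hg0 : ∀ j : ℤ, j < 0 ∨ (m : ℤ) + 1 ≤ j → g j = 0)
    (hh1 : ∀ j : ℤ, 0 ≤ j → j < (m : ℤ) → h j = 1 ∨ h j = -1)
    (hh0 : ∀ j : ℤ, j < 0 ∨ (m : ℤ) ≤ j → h j = 0)
    (f : ℤ → ℤ)
    (hf : ∀ s : ℤ, f s = (∑ j ∈ Finset.range (m + 1), g ((j : ℤ) + s) * g (j : ℤ))
        + ∑ j ∈ Finset.range m, h ((j : ℤ) + s) * h (j : ℤ)) :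
    (2 * (m : ℤ) + 1) ^ 2 + 2 * (m : ℤ) ≤
      ∑ s ∈ Finset.Icc (-((m : ℤ) + 1)) ((m : ℤ) + 1), (f s) ^ 2 ∧
    ((∑ s ∈ Finset.Icc (-((m : ℤ) + 1)) ((m : ℤ) + 1), (f s) ^ 2
        = (2 * (m : ℤ) + 1) ^ 2 + 2 * (m : ℤ)) ↔
      (∀ s : ℤ, 0 < |s| → |s| ≤ (m : ℤ) → |f s| = 1)) := by
  have hg1' : ∀ j : ℤ, 0 ≤ j → j < ((m + 1 : ℕ) : ℤ) → g j = 1 ∨ g j = -1 := by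
    intro j h1 h2; exact hg1 j h1 (by push_cast at h2 ⊢; omega)
  have hg0' : ∀ j : ℤ, j < 0 ∨ ((m + 1 : ℕ) : ℤ) ≤ j → g j = 0 := by
    intro j hj; apply hg0; push_cast at hj ⊢; omega
  -- f 0 = 2m + 1
  have hf0 : f 0 = 2 * (m : ℤ) + 1 := by
    rw [hf 0]
    have hA : ∀ j ∈ Finset.range (m + 1), g ((j : ℤ) + 0) * g (j : ℤ) = 1 := by
      intro j hj
      simp only [Finset.mem_range] at hj
      rcases hg1 (j : ℤ) (by positivity) (by exact_mod_cast by omega) with h1 | h1 <;>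
        rw [add_zero, h1] <;> ring
    have hB : ∀ j ∈ Finset.range m, h ((j : ℤ) + 0) * h (j : ℤ) = 1 := by
      intro j hj
      simp only [Finset.mem_range] at hj
      rcases hh1 (j : ℤ) (by positivity) (by exact_mod_cast hj) with h1 | h1 <;>
        rw [add_zero, h1] <;> ring
    rw [Finset.sum_congr rfl hA, Finset.sum_congr rfl hB, Finset.sum_const,
      Finset.sum_const, Finset.card_range, Finset.card_range]
    push_cast; ring
  -- f (±(m+1)) = 0
  have hftop : f ((m : ℤ) + 1) = 0 := by
    rw [hf]
    have hA : ∀ j ∈ Finset.range (m + 1), g ((j : ℤ) + ((m : ℤ) + 1)) * g (j : ℤ) = 0 := by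
      intro j hj
      rw [hg0 _ (Or.inr (by omega)), zero_mul]
    have hB : ∀ j ∈ Finset.range m, h ((j : ℤ) + ((m : ℤ) + 1)) * h (j : ℤ) = 0 := by
      intro j hj
      rw [hh0 _ (Or.inr (by omega)), zero_mul]
    rw [Finset.sum_eq_zero hA, Finset.sum_eq_zero hB, add_zero]
  have hfbot : f (-((m : ℤ) + 1)) = 0 := by
    rw [hf]
    have hA : ∀ j ∈ Finset.range (m + 1),
        g ((j : ℤ) + -((m : ℤ) + 1)) * g (j : ℤ) = 0 := by
      intro j hj
      simp only [Finset.mem_range] at hj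
      rw [hg0 _ (Or.inl (by omega)), zero_mul]
    have hB : ∀ j ∈ Finset.range m, h ((j : ℤ) + -((m : ℤ) + 1)) * h (j : ℤ) = 0 := by
      intro j hj
      simp only [Finset.mem_range] at hj
      rw [hh0 _ (Or.inl (by omega)), zero_mul]
    rw [Finset.sum_eq_zero hA, Finset.sum_eq_zero hB, add_zero]
  -- parity: 1 ≤ f s ^ 2 for 0 < |s| ≤ m
  have hodd : ∀ s : ℤ, 0 < |s| → |s| ≤ (m : ℤ) → ((f s : ZMod 2) = 1) := by
    intro s hs1 hs2
    rcases lt_trichotomy s 0 with hs | hs | hs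
    · set t : ℕ := (-s).toNat with hts
      have hst : s = -(t : ℤ) := by omega
      have ht1 : 1 ≤ t := by omega
      have htm : t ≤ m := by
        have := abs_le.1 hs2; omega
      have hA := cast_shift_sum_neg g (m + 1) hg1' hg0' t (by omega)
      have hB := cast_shift_sum_neg h m hh1 hh0 t (by omega)
      rw [hf]
      have e1 : ∀ j : ℕ, (j : ℤ) + s = (j : ℤ) - t := by intro j; omega
      simp only [e1]
      rw [Int.cast_add, hA, hB]
      rw [← Nat.cast_add, show (m + 1 - t) + (m - t) = 2 * (m - t) + 1 by omega]
      push_cast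
      rw [show ((2 : ZMod 2)) = 0 from rfl]
      ring
    · simp [hs] at hs1
    · set t : ℕ := s.toNat with hts
      have hst : s = (t : ℤ) := by omega
      have htm : t ≤ m := by
        have := abs_le.1 hs2; omega
      have hA := cast_shift_sum_pos g (m + 1) hg1' hg0' t (by omega)
      have hB := cast_shift_sum_pos h m hh1 hh0 t (by omega)
      rw [hf]
      have e1 : ∀ j : ℕ, (j : ℤ) + s = (j : ℤ) + t := by intro j; omega
      simp only [e1]
      rw [Int.cast_add, hA, hB]
      rw [← Nat.cast_add, show (m + 1 - t) + (m - t) = 2 * (m - t) + 1 by omega]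
      push_cast
      rw [show ((2 : ZMod 2)) = 0 from rfl]
      ring
  have hone : ∀ s : ℤ, 0 < |s| → |s| ≤ (m : ℤ) → 1 ≤ (f s) ^ 2 := by
    intro s hs1 hs2
    have hne : f s ≠ 0 := by
      intro h0
      have := hodd s hs1 hs2
      rw [h0] at this
      simp at this
    have h1 := Int.one_le_abs hne
    nlinarith [sq_abs (f s)]
  -- decomposition of the index set
  set T : Finset ℤ := (Finset.Icc (-(m : ℤ)) (m : ℤ)).erase 0 with hT
  have h0T : (0 : ℤ) ∈ Finset.Icc (-(m : ℤ)) (m : ℤ)  := by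
    simp only [Finset.mem_Icc]; omega
  have hTcard : T.card = 2 * m := by
    rw [hT, Finset.card_erase_of_mem h0T, Int.card_Icc]
    omega
  have hmemT : ∀ s : ℤ, s ∈ T ↔ 0 < |s| ∧ |s| ≤ (m : ℤ) := by
    intro s
    rw [hT, Finset.mem_erase, Finset.mem_Icc, abs_pos, abs_le]
  have hsplit : Finset.Icc (-((m : ℤ) + 1)) ((m : ℤ) + 1)
      = insert (-((m : ℤ) + 1)) (insert ((m : ℤ) + 1) (insert 0 T)) := by
    ext x
    simp only [hT, Finset.mem_Icc, Finset.mem_insert, Finset.mem_erase]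
    omega
  have hn1 : (-((m : ℤ) + 1)) ∉ insert ((m : ℤ) + 1) (insert 0 T) := by
    simp only [hT, Finset.mem_insert, Finset.mem_erase, Finset.mem_Icc]
    push_neg
    refine ⟨by omega, by omega, fun _ => by omega⟩
  have hn2 : ((m : ℤ) + 1) ∉ insert 0 T := by
    simp only [hT, Finset.mem_insert, Finset.mem_erase, Finset.mem_Icc]
    push_neg
    refine ⟨by omega, fun _ => by omega⟩
  have hn3 : (0 : ℤ) ∉ T := by simp [hT]
  have hsum : ∑ s ∈ Finset.Icc (-((m : ℤ) + 1)) ((m : ℤ) + 1), (f s) ^ 2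
      = (2 * (m : ℤ) + 1) ^ 2 + ∑ s ∈ T, (f s) ^ 2 := by
    rw [hsplit, Finset.sum_insert hn1, Finset.sum_insert hn2, Finset.sum_insert hn3,
      hfbot, hftop, hf0]
    ring
  have hTsum1 : ∑ s ∈ T, (1 : ℤ) = 2 * (m : ℤ) := by
    rw [Finset.sum_const, hTcard]; push_cast; ring
  have hTle : ∀ s ∈ T, (1 : ℤ) ≤ (f s) ^ 2 := by
    intro s hs
    obtain ⟨h1, h2⟩ := (hmemT s).1 hs
    exact hone s h1 h2
  constructor
  · rw [hsum]
    have : (2 * (m : ℤ)) ≤ ∑ s ∈ T, (f s) ^ 2 := by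
      rw [← hTsum1]; exact Finset.sum_le_sum hTle
    linarith
  · rw [hsum]
    constructor
    · intro heq s hs1 hs2
      have hTeq : ∑ s ∈ T, (1 : ℤ) = ∑ s ∈ T, (f s) ^ 2 := by
        rw [hTsum1]; linarith
      have := (Finset.sum_eq_sum_iff_of_le hTle).1 hTeq s ((hmemT s).2 ⟨hs1, hs2⟩)
      exact (int_sq_eq_one_iff_abs (f s)).1 this.symm
    · intro hall
      have hTeq : ∀ s ∈ T, (1 : ℤ) = (f s) ^ 2 := by
        intro s hs
        obtain ⟨h1, h2⟩ := (hmemT s).1 hs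
        exact ((int_sq_eq_one_iff_abs (f s)).2 (hall s h1 h2)).symm
      have hs2 : ∑ s ∈ T, f s ^ 2 = ∑ s ∈ T, (1 : ℤ) :=
        Finset.sum_congr rfl fun s hs => (hTeq s hs).symm
      rw [hs2, hTsum1]
end

section
/- Let g and h be binary sequences of even length m that do not form a Golay complementary pair, and let f_s = C_{g,g}(s) + C_{h,h}(s). Then Σ_{s∈ℤ} f_s² ≥ (2m)² + 8. -/
private lemma sum_range_cast_aux (m : ℕ) (F : ℤ → ℤ) :
    ∑ j ∈ Finset.range m, F (j : ℤ) = ∑ j ∈ Finset.Ico (0:ℤ) (m:ℤ), F j := by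
  have hmap : (Finset.range m).map ⟨(Nat.cast : ℕ → ℤ), Nat.cast_injective⟩
      = Finset.Ico (0:ℤ) (m:ℤ) := by
    ext x
    simp only [Finset.mem_map, Finset.mem_range, Finset.mem_Ico,
      Function.Embedding.coeFn_mk]
    constructor
    · rintro ⟨a, ha, rfl⟩
      constructor
      · exact Int.natCast_nonneg a
      · exact_mod_cast ha
    · rintro ⟨h0, hm⟩
      refine ⟨x.toNat, ?_, ?_⟩ <;> omega
  rw [← hmap, Finset.sum_map]
  rfl

private lemma corr_symm_aux (m : ℕ) (a : ℤ → ℤ)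
    (ha0 : ∀ j : ℤ, j < 0 ∨ (m : ℤ) ≤ j → a j = 0) (s : ℤ) :
    ∑ j ∈ Finset.range m, a ((j:ℤ) + s) * a (j:ℤ)
      = ∑ j ∈ Finset.range m, a ((j:ℤ) + (-s)) * a (j:ℤ) := by
  have key : ∑ j ∈ Finset.Ico (0:ℤ) (m:ℤ), a (j + s) * a j
      = ∑ j ∈ Finset.Ico (0:ℤ) (m:ℤ), a j * a (j - s) := by
    have h1 : ∑ j ∈ Finset.Ico (0:ℤ) (m:ℤ), a (j + s) * a j
        = ∑ j ∈ Finset.Ico s ((m:ℤ) + s), a j * a (j - s) := by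
      rw [show Finset.Ico s ((m:ℤ) + s) = Finset.Ico (0 + s) ((m:ℤ) + s) by rw [zero_add],
        ← Finset.map_add_right_Ico 0 (m:ℤ) s, Finset.sum_map]
      apply Finset.sum_congr rfl
      intro j _
      simp only [addRightEmbedding_apply, add_sub_cancel_right]
    have h2 : ∑ j ∈ Finset.Ico s ((m:ℤ) + s), a j * a (j - s)
        = ∑ j ∈ Finset.Ico (0:ℤ) (m:ℤ) ∪ Finset.Ico s ((m:ℤ) + s), a j * a (j - s) := by
      refine Finset.sum_subset Finset.subset_union_right ?_
      intro x _ hx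
      simp only [Finset.mem_Ico, not_and, not_lt] at hx
      have : a (x - s) = 0 := by
        apply ha0
        by_cases hxs : s ≤ x
        · right; have := hx hxs; omega
        · left; omega
      rw [this, mul_zero]
    have h3 : ∑ j ∈ Finset.Ico (0:ℤ) (m:ℤ), a j * a (j - s)
        = ∑ j ∈ Finset.Ico (0:ℤ) (m:ℤ) ∪ Finset.Ico s ((m:ℤ) + s), a j * a (j - s) := by
      refine Finset.sum_subset Finset.subset_union_left ?_
      intro x _ hx
      simp only [Finset.mem_Ico, not_and, not_lt] at hx
      have : a x = 0 := by
        apply ha0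
        by_cases hx0 : 0 ≤ x
        · right; have := hx hx0; omega
        · left; omega
      rw [this, zero_mul]
    rw [h1, h2, ← h3]
  rw [sum_range_cast_aux m (fun j => a (j + s) * a j),
    sum_range_cast_aux m (fun j => a (j + -s) * a j), key]
  apply Finset.sum_congr rfl
  intro j _
  have : j + -s = j - s := by ring
  rw [this, mul_comm]

theorem sum_sq_lower_bound_even_not_golay (m : ℕ) (heven : Even m)
    (g h : ℤ → ℤ)
    (hg1 : ∀ j : ℤ, 0 ≤ j → j < (m : ℤ) → g j = 1 ∨ g j = -1)
    (hg0 : ∀ j : ℤ, j < 0 ∨ (m : ℤ) ≤ j → g j = 0)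
    (hh1 : ∀ j : ℤ, 0 ≤ j → j < (m : ℤ) → h j = 1 ∨ h j = -1)
    (hh0 : ∀ j : ℤ, j < 0 ∨ (m : ℤ) ≤ j → h j = 0)
    (f : ℤ → ℤ)
    (hf : ∀ s : ℤ, f s = (∑ j ∈ Finset.range m, g ((j : ℤ) + s) * g (j : ℤ))
        + ∑ j ∈ Finset.range m, h ((j : ℤ) + s) * h (j : ℤ))
    (hnotgolay : ¬ (∀ s : ℤ, s ≠ 0 → f s = 0)) :
    (2 * (m : ℤ)) ^ 2 + 8 ≤ ∑ s ∈ Finset.Icc (-(m : ℤ)) (m : ℤ), (f s) ^ 2 := by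
  push_neg at hnotgolay
  obtain ⟨s₀, hs0ne, hfs0⟩ := hnotgolay
  -- f vanishes for |s| ≥ m
  have hfvanish : ∀ s : ℤ, (m:ℤ) ≤ s ∨ s ≤ -(m:ℤ) → f s = 0 := by
    intro s hs
    rw [hf]
    have hG : ∀ j ∈ Finset.range m, g ((j:ℤ)+s) * g (j:ℤ) = 0 := by
      intro j hj
      simp only [Finset.mem_range] at hj
      have hjm : (j:ℤ) < m := by exact_mod_cast hj
      have hj0 : (0:ℤ) ≤ j := Int.natCast_nonneg j
      rw [hg0 ((j:ℤ)+s) (by omega), zero_mul]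
    have hH : ∀ j ∈ Finset.range m, h ((j:ℤ)+s) * h (j:ℤ) = 0 := by
      intro j hj
      simp only [Finset.mem_range] at hj
      have hjm : (j:ℤ) < m := by exact_mod_cast hj
      have hj0 : (0:ℤ) ≤ j := Int.natCast_nonneg j
      rw [hh0 ((j:ℤ)+s) (by omega), zero_mul]
    rw [Finset.sum_eq_zero hG, Finset.sum_eq_zero hH, add_zero]
  have hs0lt : -(m:ℤ) < s₀ ∧ s₀ < m := by
    by_contra hc
    exact hfs0 (hfvanish s₀ (by omega))
  -- symmetry
  have hsymm : f (-s₀) = f s₀ := by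
    rw [hf, hf, corr_symm_aux m g hg0 s₀, corr_symm_aux m h hh0 s₀]
  -- f 0 = 2m
  have hf0 : f 0 = 2 * m := by
    rw [hf]
    have hG : ∀ j ∈ Finset.range m, g ((j:ℤ)+0) * g (j:ℤ) = 1 := by
      intro j hj
      simp only [Finset.mem_range] at hj
      have hjm : (j:ℤ) < m := by exact_mod_cast hj
      rcases hg1 (j:ℤ) (Int.natCast_nonneg j) hjm with e | e <;> simp [e]
    have hH : ∀ j ∈ Finset.range m, h ((j:ℤ)+0) * h (j:ℤ) = 1 := by
      intro j hj
      simp only [Finset.mem_range] at hj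
      have hjm : (j:ℤ) < m := by exact_mod_cast hj
      rcases hh1 (j:ℤ) (Int.natCast_nonneg j) hjm with e | e <;> simp [e]
    rw [Finset.sum_congr rfl hG, Finset.sum_congr rfl hH]
    simp [Finset.sum_const]
    ring
  -- parity: f s₀ is even
  have heven_s0 : Even (f s₀) := by
    have hcast : ((f s₀ : ℤ) : ZMod 2) = 0 := by
      rw [hf]
      push_cast
      have hterm : ∀ j ∈ Finset.range m,
          ((g ((j:ℤ)+s₀) : ZMod 2) * (g (j:ℤ) : ZMod 2))
            = ((h ((j:ℤ)+s₀) : ZMod 2) * (h (j:ℤ) : ZMod 2)) := by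
        intro j hj
        simp only [Finset.mem_range] at hj
        have hjm : (j:ℤ) < m := by exact_mod_cast hj
        have hj0 : (0:ℤ) ≤ j := Int.natCast_nonneg j
        by_cases hcase : (0:ℤ) ≤ (j:ℤ) + s₀ ∧ (j:ℤ) + s₀ < m
        · rcases hg1 _ hcase.1 hcase.2 with e1 | e1 <;>
          rcases hg1 _ hj0 hjm with e2 | e2 <;>
          rcases hh1 _ hcase.1 hcase.2 with e3 | e3 <;>
          rcases hh1 _ hj0 hjm with e4 | e4 <;>
            rw [e1, e2, e3, e4] <;> decide
        · have hout : (j:ℤ)+s₀ < 0 ∨ (m:ℤ) ≤ (j:ℤ)+s₀ := by omega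
          rw [hg0 _ hout, hh0 _ hout]
          simp
      rw [Finset.sum_congr rfl hterm]
      rw [← two_mul]
      have h2 : (2 : ZMod 2) = 0 := rfl
      rw [h2, zero_mul]
    obtain ⟨c, hc⟩ := (ZMod.intCast_zmod_eq_zero_iff_dvd _ 2).mp hcast
    exact ⟨c, by omega⟩
  obtain ⟨k, hk⟩ := heven_s0
  have hk0 : k ≠ 0 := by
    rintro rfl
    exact hfs0 (by omega)
  have hsq : 4 ≤ (f s₀)^2 := by
    have h1 : k ≤ -1 ∨ 1 ≤ k := by omega
    rcases h1 with h1 | h1 <;> nlinarith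
  -- bound the sum from below by the three terms at 0, s₀, -s₀
  have hsub : ({0, s₀, -s₀} : Finset ℤ) ⊆ Finset.Icc (-(m:ℤ)) (m:ℤ) := by
    intro x hx
    simp only [Finset.mem_insert, Finset.mem_singleton] at hx
    rcases hx with rfl | rfl | rfl <;> simp only [Finset.mem_Icc] <;> omega
  have hnotmem1 : (0:ℤ) ∉ ({s₀, -s₀} : Finset ℤ) := by
    simp only [Finset.mem_insert, Finset.mem_singleton]
    push_neg
    omega
  have hnotmem2 : s₀ ∉ ({-s₀} : Finset ℤ) := by
    simp only [Finset.mem_singleton]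
    omega
  have hsum3 : ∑ s ∈ ({0, s₀, -s₀} : Finset ℤ), f s ^ 2
      = f 0 ^ 2 + f s₀ ^ 2 + f (-s₀) ^ 2 := by
    rw [Finset.sum_insert hnotmem1, Finset.sum_insert hnotmem2, Finset.sum_singleton]
    ring
  have hmono := Finset.sum_le_sum_of_subset_of_nonneg hsub
    (fun i _ _ => sq_nonneg (f i))
  calc (2 * (m:ℤ))^2 + 8 ≤ f 0 ^ 2 + f s₀ ^ 2 + f (-s₀) ^ 2 := by
        rw [hf0, hsymm]; nlinarith
    _ = ∑ s ∈ ({0, s₀, -s₀} : Finset ℤ), f s ^ 2 := hsum3.symm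
    _ ≤ ∑ s ∈ Finset.Icc (-(m:ℤ)) (m:ℤ), f s ^ 2 := hmono
end

section
/- Let g(z), h(z), a(z), b(z) ∈ ℂ[z] have all coefficients of magnitude ≤ 1. Suppose (g,h) is a Golay complementary pair (|g(z)|²+|h(z)|² constant on the unit circle), a is zero or a monomial z^j with j ≥ deg g, and b is zero or a monomial z^k with k ≥ deg h. Let c be the number of nonzero polynomials among a, b. Then every nonconstant coefficient f_s (s ≠ 0) of the Laurent polynomial f(z) = |g(z)+a(z)|² + |h(z)+b(z)|² satisfies |f_s| ≤ c. -/
open Polynomial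

/-- The aperiodic autocorrelation of the coefficient sequence of a complex
polynomial at shift `s`, i.e. the coefficient of `z^s` in `p(z) * conj(p)(1/z)`. -/
noncomputable def acorrC (p : Polynomial ℂ) (s : ℤ) : ℂ :=
  ∑ j ∈ Finset.range (p.natDegree + 1),
    (if 0 ≤ (j : ℤ) + s then p.coeff ((j : ℤ) + s).toNat else 0) *
      (starRingEnd ℂ) (p.coeff j)

/-- General cross-correlation with explicit summation range. -/
noncomputable def crossC (p q : Polynomial ℂ) (s : ℤ) (n : ℕ) : ℂ :=
  ∑ j ∈ Finset.range n,
    (if 0 ≤ (j : ℤ) + s then p.coeff ((j : ℤ) + s).toNat else 0) *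
      (starRingEnd ℂ) (q.coeff j)

lemma acorrC_eq_crossC (p : Polynomial ℂ) (s : ℤ) (n : ℕ) (hn : p.natDegree < n) :
    acorrC p s = crossC p p s n := by
  unfold acorrC crossC
  apply Finset.sum_subset
  · exact Finset.range_subset_range.mpr hn
  · intro j _ hj
    have : p.natDegree < j := by
      simp only [Finset.mem_range, not_lt] at hj; omega
    rw [p.coeff_eq_zero_of_natDegree_lt this, map_zero, mul_zero]

lemma crossC_add_add (p q : Polynomial ℂ) (s : ℤ) (n : ℕ) :
    crossC (p + q) (p + q) s n =
      crossC p p s n + crossC p q s n + crossC q p s n + crossC q q s n := by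
  unfold crossC
  rw [← Finset.sum_add_distrib, ← Finset.sum_add_distrib, ← Finset.sum_add_distrib]
  apply Finset.sum_congr rfl
  intro j _
  simp only [coeff_add, map_add]
  split_ifs <;> ring

lemma crossC_right_pow (p : Polynomial ℂ) (s : ℤ) (j : ℕ) :
    crossC p (X ^ j) s (j + 1) =
      if 0 ≤ (j : ℤ) + s then p.coeff ((j : ℤ) + s).toNat else 0 := by
  unfold crossC
  rw [Finset.sum_eq_single j]
  · simp
  · intro i _ hij
    simp [coeff_X_pow, hij]
  · intro hj
    simp at hj

lemma crossC_left_pow (q : Polynomial ℂ) (s : ℤ) (j n : ℕ) (hq : q.natDegree < n) :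
    crossC (X ^ j) q s n =
      if 0 ≤ (j : ℤ) - s then (starRingEnd ℂ) (q.coeff ((j : ℤ) - s).toNat) else 0 := by
  unfold crossC
  have key : ∀ i : ℕ,
      (if 0 ≤ (i : ℤ) + s then (X ^ j : Polynomial ℂ).coeff ((i : ℤ) + s).toNat else 0) *
        (starRingEnd ℂ) (q.coeff i)
      = if (i : ℤ) = (j : ℤ) - s then (starRingEnd ℂ) (q.coeff i) else 0 := by
    intro i
    by_cases h1 : 0 ≤ (i : ℤ) + s
    · rw [if_pos h1, coeff_X_pow]
      by_cases h2 : (i : ℤ) = (j : ℤ) - s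
      · have : ((i : ℤ) + s).toNat = j := by omega
        rw [if_pos this, if_pos h2, one_mul]
      · have : ((i : ℤ) + s).toNat ≠ j := by omega
        rw [if_neg this, if_neg h2, zero_mul]
    · rw [if_neg h1, zero_mul, if_neg (by omega)]
  simp only [key]
  by_cases h1 : 0 ≤ (j : ℤ) - s
  · set m := ((j : ℤ) - s).toNat with hm
    have hms : (m : ℤ) = (j : ℤ) - s := by omega
    by_cases h2 : m < n
    · rw [Finset.sum_eq_single m]
      · rw [if_pos (by omega), if_pos h1]
      · intro i _ him
        rw [if_neg (by omega)]
      · intro hmn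
        simp at hmn; omega
    · rw [if_pos h1, q.coeff_eq_zero_of_natDegree_lt (by omega : q.natDegree < m), map_zero]
      apply Finset.sum_eq_zero
      intro i hi
      simp only [Finset.mem_range] at hi
      rw [if_neg (by omega)]
  · rw [if_neg h1]
    apply Finset.sum_eq_zero
    intro i _
    rw [if_neg (by omega)]

lemma pert (g : Polynomial ℂ) (hgc : ∀ j : ℕ, ‖g.coeff j‖ ≤ 1) (j : ℕ)
    (hj : g.natDegree ≤ j) (s : ℤ) (hs : s ≠ 0) :
    ‖acorrC (g + X ^ j) s - acorrC g s‖ ≤ 1 := by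
  have hdeg : (g + X ^ j).natDegree < j + 1 := by
    have := natDegree_add_le g (X ^ j : Polynomial ℂ)
    rw [natDegree_X_pow] at this
    omega
  rw [acorrC_eq_crossC (g + X ^ j) s (j + 1) hdeg,
    acorrC_eq_crossC g s (j + 1) (by omega), crossC_add_add,
    crossC_right_pow, crossC_left_pow g s j (j + 1) (by omega),
    crossC_left_pow (X ^ j) s j (j + 1) (by rw [natDegree_X_pow]; omega)]
  have hxx : (if 0 ≤ (j : ℤ) - s then
      (starRingEnd ℂ) ((X ^ j : Polynomial ℂ).coeff ((j : ℤ) - s).toNat) else 0) = 0 := by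
    split_ifs with h
    · rw [coeff_X_pow, if_neg (by omega), map_zero]
    · rfl
  rw [hxx]
  rw [show ∀ x A B : ℂ, x + A + B + 0 - x = A + B from fun x A B => by ring]
  rcases lt_or_gt_of_ne hs with hneg | hpos
  · -- s < 0 : the term g.coeff (j - s) vanishes
    have h2 : (if 0 ≤ (j : ℤ) - s then
        (starRingEnd ℂ) (g.coeff ((j : ℤ) - s).toNat) else 0) = 0 := by
      rw [if_pos (by omega), g.coeff_eq_zero_of_natDegree_lt (by omega), map_zero]
    rw [h2, add_zero]
    split_ifs
    · exact hgc _
    · simp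
  · have h1 : (if 0 ≤ (j : ℤ) + s then g.coeff ((j : ℤ) + s).toNat else 0) = 0 := by
      rw [if_pos (by omega), g.coeff_eq_zero_of_natDegree_lt (by omega)]
    rw [h1, zero_add]
    split_ifs
    · rw [RCLike.norm_conj]; exact hgc _
    · simp

lemma pert' (g a : Polynomial ℂ) (hgc : ∀ j : ℕ, ‖g.coeff j‖ ≤ 1)
    (ha : a = 0 ∨ ∃ j : ℕ, g.natDegree ≤ j ∧ a = X ^ j) (s : ℤ) (hs : s ≠ 0) :
    ‖acorrC (g + a) s - acorrC g s‖ ≤ (if a = 0 then 0 else 1 : ℝ) := by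
  rcases ha with rfl | ⟨j, hj, rfl⟩
  · simp
  · rw [if_neg (pow_ne_zero j (X_ne_zero : (X : Polynomial ℂ) ≠ 0))]
    exact pert g hgc j hj s hs

theorem perturbed_golay_pair_bound (g h a b : Polynomial ℂ)
    (hgc : ∀ j : ℕ, ‖g.coeff j‖ ≤ 1) (hhc : ∀ j : ℕ, ‖h.coeff j‖ ≤ 1)
    (hac : ∀ j : ℕ, ‖a.coeff j‖ ≤ 1) (hbc : ∀ j : ℕ, ‖b.coeff j‖ ≤ 1)
    (hgolay : ∀ s : ℤ, s ≠ 0 → acorrC g s + acorrC h s = 0)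
    (ha : a = 0 ∨ ∃ j : ℕ, g.natDegree ≤ j ∧ a = X ^ j)
    (hb : b = 0 ∨ ∃ k : ℕ, h.natDegree ≤ k ∧ b = X ^ k)
    (c : ℕ) (hc : c = (if a = 0 then 0 else 1) + (if b = 0 then 0 else 1)) :
    ∀ s : ℤ, s ≠ 0 → ‖acorrC (g + a) s + acorrC (h + b) s‖ ≤ c := by
  intro s hs
  have h1 := pert' g a hgc ha s hs
  have h2 := pert' h b hhc hb s hs
  have key : acorrC (g + a) s + acorrC (h + b) s
      = (acorrC (g + a) s - acorrC g s) + (acorrC (h + b) s - acorrC h s) := by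
    have := hgolay s hs
    ring_nf
    ring_nf at this
    linear_combination this
  rw [key]
  calc ‖(acorrC (g + a) s - acorrC g s) + (acorrC (h + b) s - acorrC h s)‖
      ≤ ‖acorrC (g + a) s - acorrC g s‖ + ‖acorrC (h + b) s - acorrC h s‖ :=
        norm_add_le _ _
    _ ≤ (if a = 0 then 0 else 1 : ℝ) + (if b = 0 then 0 else 1 : ℝ) := add_le_add h1 h2
    _ ≤ c := by
        rw [hc]; push_cast; split_ifs <;> norm_num
end

section
/- Let (g,h) be a binary Golay complementary pair of length m ≥ 1 and u ∈ {1,-1}. Then every coefficient f_s with s ≠ 0 of the Laurent polynomial |g(z) + u z^m|² + |h(z)|² has |f_s| ≤ 1. -/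
open Polynomial

/-- The aperiodic autocorrelation of the coefficient sequence of an integer
polynomial at shift `s`, i.e. the coefficient of `z^s` in `p(z) * p(1/z)`. -/
def acorrZ (p : Polynomial ℤ) (s : ℤ) : ℤ :=
  ∑ j ∈ Finset.range (p.natDegree + 1),
    (if 0 ≤ (j : ℤ) + s then p.coeff ((j : ℤ) + s).toNat else 0) * p.coeff j

theorem golay_extend_one_near_complementary (m : ℕ) (hm : 1 ≤ m)
    (g h : Polynomial ℤ) (u : ℤ) (hu : u = 1 ∨ u = -1)
    (hgdeg : g.natDegree = m - 1) (hhdeg : h.natDegree = m - 1)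
    (hgc : ∀ j : ℕ, j < m → g.coeff j = 1 ∨ g.coeff j = -1)
    (hhc : ∀ j : ℕ, j < m → h.coeff j = 1 ∨ h.coeff j = -1)
    (hgolay : ∀ s : ℤ, s ≠ 0 → acorrZ g s + acorrZ h s = 0) :
    ∀ s : ℤ, s ≠ 0 → |acorrZ (g + C u * X ^ m) s + acorrZ h s| ≤ 1 := by
  intro s hs
  set g' := g + C u * X ^ m with hg'
  have hu0 : u ≠ 0 := by rcases hu with h1 | h1 <;> simp [h1]
  have hdm : (C u * X ^ m).natDegree = m := by
    simpa using natDegree_C_mul_X_pow m u hu0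
  have hglt : g.natDegree < m := by omega
  have hgdeg' : g'.natDegree = m := by
    rw [hg', natDegree_add_eq_right_of_natDegree_lt, hdm]
    rw [hdm]; exact hglt
  have hcoeff : ∀ k : ℕ, g'.coeff k = g.coeff k + if k = m then u else 0 := by
    intro k
    simp [hg', coeff_X_pow, mul_ite, eq_comm]
  have hgm : g.coeff m = 0 := coeff_eq_zero_of_natDegree_lt (by omega)
  have hcoeff_lt : ∀ k : ℕ, k < m → g'.coeff k = g.coeff k := by
    intro k hk; rw [hcoeff]; simp [Nat.ne_of_lt hk]
  have habsg : ∀ k : ℕ, k < m → |g.coeff k| = 1 := by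
    intro k hk; rcases hgc k hk with h1 | h1 <;> simp [h1]
  have habsu : |u| = 1 := by rcases hu with h1 | h1 <;> simp [h1]
  set E : ℤ := ∑ j ∈ Finset.range m, (if (j : ℤ) + s = m then u else 0) * g.coeff j with hE
  set F : ℤ := (if 0 ≤ (m : ℤ) + s then g'.coeff ((m : ℤ) + s).toNat else 0) * u with hF
  have hsplit : acorrZ g' s = acorrZ g s + E + F := by
    rw [acorrZ, acorrZ, hgdeg', hgdeg]
    have hm1 : m - 1 + 1 = m := by omega
    rw [hm1, Finset.sum_range_succ]
    congr 1
    · have hterm : ∀ j ∈ Finset.range m,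
          (if 0 ≤ (j : ℤ) + s then g'.coeff ((j : ℤ) + s).toNat else 0) * g'.coeff j
            = (if 0 ≤ (j : ℤ) + s then g.coeff ((j : ℤ) + s).toNat else 0) * g.coeff j
              + (if (j : ℤ) + s = m then u else 0) * g.coeff j := by
        intro j hj
        rw [Finset.mem_range] at hj
        rw [hcoeff_lt j hj, ← add_mul]
        congr 1
        by_cases h0 : 0 ≤ (j : ℤ) + s
        · rw [if_pos h0, if_pos h0, hcoeff]
          congr 1
          exact if_congr (by omega) rfl rfl
        · rw [if_neg h0, if_neg h0, if_neg (by omega : ¬ ((j : ℤ) + s = m))]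
          ring
      rw [Finset.sum_congr rfl hterm, Finset.sum_add_distrib]
    · rw [hcoeff m, hgm, if_pos rfl, zero_add]
  have hkey : acorrZ g' s + acorrZ h s = E + F := by
    have h0 := hgolay s hs
    rw [hsplit]; linarith
  rw [hkey]
  rcases lt_trichotomy s 0 with hneg | hzero | hpos
  · -- s < 0 : E = 0
    have hE0 : E = 0 := by
      apply Finset.sum_eq_zero
      intro j hj
      rw [Finset.mem_range] at hj
      rw [if_neg (by omega : ¬ ((j : ℤ) + s = m)), zero_mul]
    rw [hE0, zero_add]
    by_cases h0 : 0 ≤ (m : ℤ) + s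
    · have hk : ((m : ℤ) + s).toNat < m := by omega
      rw [hF, if_pos h0, hcoeff_lt _ hk, abs_mul, habsg _ hk, habsu]
      norm_num
    · rw [hF, if_neg h0, zero_mul]; simp
  · exact absurd hzero hs
  · -- s > 0 : F = 0
    have hF0 : F = 0 := by
      rw [hF, if_pos (by omega : 0 ≤ (m : ℤ) + s),
        coeff_eq_zero_of_natDegree_lt (by rw [hgdeg']; omega), zero_mul]
    rw [hF0, add_zero]
    by_cases hsm : s ≤ (m : ℤ)
    · set j0 : ℕ := ((m : ℤ) - s).toNat with hj0
      have hj0m : j0 < m := by omega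
      have hj0c : (j0 : ℤ) = (m : ℤ) - s := by omega
      have hE1 : E = u * g.coeff j0 := by
        rw [hE]
        rw [Finset.sum_eq_single_of_mem j0 (Finset.mem_range.mpr hj0m)
          (fun j hj hne => by
            rw [Finset.mem_range] at hj
            rw [if_neg (by omega : ¬ ((j : ℤ) + s = m)), zero_mul])]
        rw [if_pos (by omega : (j0 : ℤ) + s = m)]
      rw [hE1, abs_mul, habsu, habsg _ hj0m]
      norm_num
    · have hE0 : E = 0 := by
        apply Finset.sum_eq_zero
        intro j hj
        rw [Finset.mem_range] at hj
        rw [if_neg (by omega : ¬ ((j : ℤ) + s = m)), zero_mul]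
      rw [hE0]; simp
end
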